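/- arXiv:1609.09695 — 8 statements merged into one kernel-verified Lean document; each statement's English description precedes it below -/
import Mathlib

section
/- If κ is an infinite cardinal, α is an ordinal, and X is a left-separated topological space with κ·α ≤ ord_ℓ(X) ≤ κ·(α+1), then there is a closed subspace Y ⊆ X with ord_ℓ(Y) = κ·α. -/
/-!
Let `r` be a left-separating well-ordering of `X` of minimal type and `Y` its initial segment of
type `κ·α`. `Y` is closed and `r` restricts to it, so `ord_ℓ(Y) ≤ κ·α`; the tail `X ∖ Y` has a type
`δ` with `κ·α + δ = ord_ℓ(X) ≤ κ·α + κ`, so `δ ≤ κ`. If `Y` had a left-separating ordering of type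
`μ < κ·α`, putting it in front of the tail would be left-separating on `X` (because `Y` is closed),
of type `μ + δ < κ·α + δ = ord_ℓ(X)`: as `κ` is additively principal, `μ + κ ≤ κ·α`.
-/

universe u

open Cardinal Ordinal

/-- `o` is the order type of some left-separating well-ordering of `X`:
a well-ordering all of whose initial segments are closed. -/
def IsLeftSepType (X : Type u) [TopologicalSpace X] (o : Ordinal.{u}) : Prop :=
  ∃ (r : X → X → Prop) (hwo : IsWellOrder X r),
    (∀ x : X, IsClosed {y | r y x}) ∧ o = @Ordinal.type X r hwo

/-- A space is left-separated if it admits a left-separating well-ordering. -/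
def IsLeftSeparated (X : Type u) [TopologicalSpace X] : Prop :=
  ∃ o, IsLeftSepType X o

/-- The left-separating type of a space: the minimum of the order types of its
left-separating well-orderings. -/
noncomputable def ordL (X : Type u) [TopologicalSpace X] : Ordinal.{u} :=
  sInf {o | IsLeftSepType X o}

namespace Ordinal

theorem add_le_mul_of_lt_mul {a b c : Ordinal} (ha : IsPrincipal (· + ·) a) (hc : c < a * b) :
    c + a ≤ a * b := by
  have ha₀ : a ≠ 0 := by rintro rfl; simp at hc
  calc c + a = a * (c / a) + (c % a + a) := by rw [← add_assoc, div_add_mod]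
    _ = a * (c / a + 1) := by rw [ha.add_eq_right (mod_lt c ha₀), mul_add_one]
    _ ≤ a * b := mul_le_mul_right (Order.add_one_le_of_lt ((lt_mul_iff_div_lt ha₀).1 hc)) _

theorem add_lt_mul_add_of_lt_mul {a b c d : Ordinal} (ha : IsPrincipal (· + ·) a)
    (hc : c < a * b) (hd : d ≤ a) : c + d < a * b + d := by
  rcases eq_or_ne d 0 with rfl | hd₀
  · simpa using hc
  calc c + d ≤ c + a := add_le_add_right hd c
    _ ≤ a * b := add_le_mul_of_lt_mul ha hc
    _ < a * b + d := lt_add_of_pos_right _ (pos_iff_ne_zero.2 hd₀)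

theorem type_subrel_add_type_subrel_compl {X : Type u} (r : X → X → Prop)
    [IsWellOrder X r] {Y : Set X} (hY : ∀ a b, r a b → b ∈ Y → a ∈ Y) :
    type (Subrel r (· ∈ Y)) + type (Subrel r (· ∈ Yᶜ)) = type r := by
  classical
  rw [← type_sum_lex]
  refine RelIso.ordinalType_congr ⟨Equiv.Set.sumCompl Y, ?_⟩
  rintro (a | a) (b | b)
  · simp
  · simp only [Equiv.Set.sumCompl_apply_inl, Equiv.Set.sumCompl_apply_inr, Sum.Lex.sep, iff_true]
    exact (trichotomous_of r a.1 b.1).resolve_right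
      (by rintro (h | h); exacts [b.2 (h ▸ a.2), b.2 (hY _ _ h a.2)])
  · simpa using fun h => a.2 (hY _ _ h b.2)
  · simp

end Ordinal

section LeftSeparated

variable {X : Type u} [TopologicalSpace X]

theorem IsLeftSeparated.isLeftSepType_ordL (hX : IsLeftSeparated X) :
    IsLeftSepType X (ordL X) :=
  csInf_mem hX

theorem ordL_le {o : Ordinal} (h : IsLeftSepType X o) : ordL X ≤ o :=
  csInf_le' h

theorem isLeftSepType_type_subrel {r : X → X → Prop} [IsWellOrder X r]
    (hr : ∀ x, IsClosed {y | r y x}) (Y : Set X) : IsLeftSepType Y (type (Subrel r (· ∈ Y))) :=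
  ⟨Subrel r (· ∈ Y), inferInstance, fun y => (hr y).preimage continuous_subtype_val, rfl⟩

theorem isLeftSepType_type_add_type_subrel_compl {Y : Set X} (hY : IsClosed Y)
    {s : Y → Y → Prop} [IsWellOrder Y s] (hs : ∀ y, IsClosed {z | s z y})
    {r : X → X → Prop} [IsWellOrder X r] (hr : ∀ x, IsClosed {y | r y x}) :
    IsLeftSepType X (type s + type (Subrel r (· ∈ Yᶜ))) := by
  classical
  let e := (Equiv.Set.sumCompl Y).symm
  refine ⟨e ⁻¹'o Sum.Lex s (Subrel r (· ∈ Yᶜ)), (RelIso.preimage e _).toRelEmbedding.isWellOrder,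
    fun b => ?_, by rw [(RelIso.preimage e _).ordinalType_congr, type_sum_lex]⟩
  by_cases hb : b ∈ Y
  · convert hY.isClosedMap_subtype_val _ (hs ⟨b, hb⟩)
    ext a
    by_cases ha : a ∈ Y <;> simp [e, Order.Preimage, ha, hb, Equiv.Set.sumCompl_symm_apply_of_mem,
      Equiv.Set.sumCompl_symm_apply_of_notMem]
  · convert hY.union (hr b)
    ext a
    by_cases ha : a ∈ Y <;> simp [e, Order.Preimage, ha, hb, Equiv.Set.sumCompl_symm_apply_of_mem,
      Equiv.Set.sumCompl_symm_apply_of_notMem]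

theorem exists_isClosed_type_subrel_eq {r : X → X → Prop} [IsWellOrder X r]
    (hr : ∀ x, IsClosed {y | r y x}) {o : Ordinal} (ho : o ≤ type r) :
    ∃ Y : Set X, IsClosed Y ∧ type (Subrel r (· ∈ Y)) = o ∧
      o + type (Subrel r (· ∈ Yᶜ)) = type r := by
  rcases ho.lt_or_eq with ho | rfl
  · obtain ⟨x, rfl⟩ := typein_surj r ho
    refine ⟨{y | r y x}, hr x, type_subrel r x, ?_⟩
    rw [← type_subrel r x]
    exact type_subrel_add_type_subrel_compl r fun a b hab hb => _root_.trans hab hb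
  · have hempty : type (Subrel r (· ∈ (Set.univ : Set X)ᶜ)) = 0 :=
      type_eq_zero_iff_isEmpty.2 ⟨fun x => x.2 trivial⟩
    have huniv := type_subrel_add_type_subrel_compl r (Y := Set.univ) fun _ _ _ _ => trivial
    rw [hempty, add_zero] at huniv
    exact ⟨Set.univ, isClosed_univ, huniv, by rw [hempty, add_zero]⟩

theorem ordL_le_ordL_add_type_subrel_compl {Y : Set X} (hY : IsClosed Y)
    (hYsep : IsLeftSeparated Y) {r : X → X → Prop} [IsWellOrder X r]
    (hr : ∀ x, IsClosed {y | r y x}) : ordL X ≤ ordL Y + type (Subrel r (· ∈ Yᶜ)) := by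
  obtain ⟨s, _, hs, hsY⟩ := hYsep.isLeftSepType_ordL
  exact hsY ▸ ordL_le (isLeftSepType_type_add_type_subrel_compl hY hs hr)

end LeftSeparated

theorem stmt_5 (κ : Cardinal.{0}) (hκ : Cardinal.aleph0 ≤ κ) (α : Ordinal.{0})
    (X : Type) [TopologicalSpace X] (hX : IsLeftSeparated X)
    (h1 : κ.ord * α ≤ ordL X) (h2 : ordL X ≤ κ.ord * (α + 1)) :
    ∃ Y : Set X, IsClosed Y ∧ IsLeftSeparated ↥Y ∧ ordL ↥Y = κ.ord * α := by
  obtain ⟨r, _, hr, hrX⟩ := hX.isLeftSepType_ordL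
  obtain ⟨Y, hY, hYr, hYX⟩ := exists_isClosed_type_subrel_eq hr (hrX ▸ h1)
  have hYsep : IsLeftSepType Y (κ.ord * α) := hYr ▸ isLeftSepType_type_subrel hr Y
  refine ⟨Y, hY, ⟨_, hYsep⟩, (ordL_le hYsep).antisymm (not_lt.1 fun hlt => ?_)⟩
  have hcompl : type (Subrel r (· ∈ Yᶜ)) ≤ κ.ord := by
    rw [← add_le_add_iff_left (κ.ord * α), hYX, ← hrX, ← mul_add_one]
    exact h2
  refine (ordL_le_ordL_add_type_subrel_compl hY ⟨_, hYsep⟩ hr).not_gt ?_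
  rw [hrX, ← hYX]
  exact add_lt_mul_add_of_lt_mul (isPrincipal_add_ord hκ) hlt hcompl
end

section
/- Assume: (S1) κ is a cardinal with cf(κ) > ω; (S2) 𝒯 = (T,⪯) is a well-founded partially ordered set with |T| ≤ κ; (S3) X is a topological space with |X| = κ; (S4) {X_t : t ∈ T} is a partition of X into pieces each of cardinality κ; and (S5) for each s ∈ T every point x ∈ X_s has a neighborhood U(x) such that U(x) \ {x} ⊆ ⋃{X_t : s ≺ t, t ∈ T}. Then X is left-separated and ord_ℓ(X) ≤ κ·rk(𝒯) (ordinal multiplication). -/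
universe u

open Cardinal Ordinal

/-- The rank of a well-founded partial order: `rk(𝒯) = sup { rk_𝒯(t) + 1 : t ∈ T }`,
where `rk_𝒯` is the usual well-founded rank function. -/
noncomputable def pordRank (T : Type u) [PartialOrder T] [WellFoundedLT T] : Ordinal.{u} :=
  ⨆ t : T, IsWellFounded.rank (α := T) (· < ·) t + 1

/-!
Index each point `x` by the piece `τ x` containing it and by its position `g x < κ` in an
enumeration of `X`, and order `X` by the ordinal `κ * rk(τ x) + g x < κ * rk(𝒯)`. This is
injective, and by (S5) every other point near `x` lies in a piece of strictly larger rank, hence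
comes later; so each `x` has a neighbourhood disjoint from its initial segment, which is
therefore closed.
-/

open Function Topology

theorem Ordinal.mul_add_lt_mul_of_lt {a b b' c : Ordinal} (hc : c < a) (hb : b < b') :
    a * b + c < a * b' :=
  (lt_mul_add_one_iff.2 ⟨c, hc, le_rfl⟩).trans_le (mul_le_mul_right (Order.add_one_le_of_lt hb) a)

theorem Cardinal.exists_injective_lt_ord_mk (X : Type u) :
    ∃ g : X → Ordinal.{u}, Injective g ∧ ∀ x, g x < (#X).ord := by
  obtain ⟨e⟩ : Nonempty (X ≃ (#X).ord.ToType) := by rw [← Cardinal.eq, mk_ord_toType]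
  exact ⟨fun x => ToType.mk.symm (e x),
    fun x y h => e.injective (ToType.mk.symm.injective (Subtype.ext h)),
    fun x => (ToType.mk.symm (e x)).2⟩

theorem Set.exists_index_of_iUnion_eq_univ {ι α : Type*} {P : ι → Set α}
    (hdisj : Pairwise (Disjoint on P)) (hcov : ⋃ i, P i = univ) :
    ∃ τ : α → ι, ∀ x i, x ∈ P i ↔ τ x = i := by
  choose τ hτ using fun x => mem_iUnion.1 (hcov.symm ▸ mem_univ x)
  refine ⟨τ, fun x i => ⟨fun hx => ?_, fun h => h ▸ hτ x⟩⟩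
  by_contra h
  exact disjoint_left.1 (hdisj h) (hτ x) hx

theorem rank_lt_pordRank {T : Type u} [PartialOrder T] [WellFoundedLT T] (t : T) :
    IsWellFounded.rank (· < ·) t < pordRank T :=
  (Order.lt_add_one_iff.2 le_rfl).trans_le
    (Ordinal.le_iSup (fun t : T => IsWellFounded.rank (α := T) (· < ·) t + 1) t)

section LeftSeparated

variable {X : Type u} [TopologicalSpace X]

theorem ordL_le_of_isLeftSepType {o : Ordinal.{u}} (h : IsLeftSepType X o) : ordL X ≤ o :=
  csInf_le' h

theorem isClosed_setOf_lt_of_eventually_le {α : Type*} [LinearOrder α] {f : X → α}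
    (hf : ∀ x, ∀ᶠ y in 𝓝 x, f x ≤ f y) (x : X) : IsClosed {y | f y < f x} := by
  rw [← isOpen_compl_iff, isOpen_iff_mem_nhds]
  intro z hz
  filter_upwards [hf z] with y hy
  exact not_lt.2 ((not_lt.1 hz).trans hy)

theorem exists_isLeftSepType_le {f : X → Ordinal.{u}} (hf : Injective f)
    (hloc : ∀ x, ∀ᶠ y in 𝓝 x, f x ≤ f y) {o : Ordinal.{u}} (hfo : ∀ x, f x < o) :
    ∃ o' ≤ o, IsLeftSepType X o' := by
  let F : (f ⁻¹'o (· < ·)) ↪r ((· < ·) : o.ToType → o.ToType → Prop) :=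
    { toFun := fun x => ToType.mk ⟨f x, hfo x⟩
      inj' := fun x y hxy => hf (congrArg Subtype.val (ToType.mk.injective hxy))
      map_rel_iff' := ToType.mk.lt_iff_lt }
  have := F.isWellOrder
  exact ⟨_, F.ordinal_type_le.trans_eq (type_toType o), _, this,
    isClosed_setOf_lt_of_eventually_le hloc, rfl⟩

theorem isLeftSeparated_and_ordL_le_mul_pordRank {T : Type u} [PartialOrder T]
    [WellFoundedLT T] (τ : X → T) (hτ : ∀ x, ∀ᶠ y in 𝓝[≠] x, τ x < τ y) {a : Ordinal.{u}}
    {g : X → Ordinal.{u}} (hg : Injective g) (hga : ∀ x, g x < a) :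
    IsLeftSeparated X ∧ ordL X ≤ a * pordRank T := by
  let ρ x := IsWellFounded.rank (α := T) (· < ·) (τ x)
  let f x := a * ρ x + g x
  have hmono : ∀ {x y}, ρ x < ρ y → f x < f y := fun h =>
    (Ordinal.mul_add_lt_mul_of_lt (hga _) h).trans_le le_self_add
  have hf : Injective f := by
    intro x y hxy
    rcases lt_trichotomy (ρ x) (ρ y) with h | h | h
    · exact absurd hxy (hmono h).ne
    · exact hg (add_left_cancel (a := a * ρ y) (by simpa only [f, h] using hxy))
    · exact absurd hxy (hmono h).ne'
  have hloc : ∀ x, ∀ᶠ y in 𝓝 x, f x ≤ f y := fun x => by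
    filter_upwards [eventually_nhdsWithin_iff.1 (hτ x)] with y hy
    rcases eq_or_ne y x with rfl | hne
    · rfl
    · exact (hmono (IsWellFounded.rank_lt_of_rel (hy hne))).le
  obtain ⟨o, ho, h⟩ := exists_isLeftSepType_le hf hloc
    fun x => Ordinal.mul_add_lt_mul_of_lt (hga x) (rank_lt_pordRank (τ x))
  exact ⟨⟨o, h⟩, (ordL_le_of_isLeftSepType h).trans ho⟩

end LeftSeparated

theorem stmt_6_general (κ : Cardinal.{0})
    (T : Type) [PartialOrder T] [WellFoundedLT T]
    (X : Type) [TopologicalSpace X] (hX : #X = κ)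
    (P : T → Set X)
    (hdisj : ∀ s t : T, s ≠ t → Disjoint (P s) (P t))
    (hcov : (⋃ t, P t) = Set.univ)
    (hS5 : ∀ s : T, ∀ x ∈ P s, ∃ U ∈ nhds x, U \ {x} ⊆ ⋃ t ∈ {t : T | s < t}, P t) :
    IsLeftSeparated X ∧ ordL X ≤ κ.ord * pordRank T := by
  obtain ⟨τ, hτ⟩ := Set.exists_index_of_iUnion_eq_univ hdisj hcov
  obtain ⟨g, hg, hgκ⟩ := Cardinal.exists_injective_lt_ord_mk X
  rw [hX] at hgκ
  refine isLeftSeparated_and_ordL_le_mul_pordRank τ (fun x => ?_) hg hgκ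
  obtain ⟨U, hU, hUx⟩ := hS5 (τ x) x ((hτ x _).2 rfl)
  filter_upwards [inter_mem_nhdsWithin {x}ᶜ hU] with y ⟨hne, hy⟩
  obtain ⟨t, hxt, hyt⟩ := Set.mem_iUnion₂.1 (hUx ⟨hy, hne⟩)
  rwa [(hτ y t).1 hyt]

theorem stmt_6 (κ : Cardinal.{0}) (hcf : Cardinal.aleph0 < κ.ord.cof)
    (T : Type) [PartialOrder T] [WellFoundedLT T] (hT : #T ≤ κ)
    (X : Type) [TopologicalSpace X] (hX : #X = κ)
    (P : T → Set X)
    (hdisj : ∀ s t : T, s ≠ t → Disjoint (P s) (P t))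
    (hcov : (⋃ t, P t) = Set.univ)
    (hsize : ∀ t, #↥(P t) = κ)
    (hS5 : ∀ s : T, ∀ x ∈ P s, ∃ U ∈ nhds x, U \ {x} ⊆ ⋃ t ∈ {t : T | s < t}, P t) :
    IsLeftSeparated X ∧ ordL X ≤ κ.ord * pordRank T :=
  stmt_6_general κ T X hX P hdisj hcov hS5
end

section
/- Assume: (S1) κ is a cardinal with cf(κ) > ω; (S2) 𝒯 = (T,⪯) is a well-founded partially ordered set with |T| ≤ κ; (S3) X is a topological space with |X| = κ; (S4) {X_t : t ∈ T} is a partition of X into pieces each of cardinality κ; and (S6) for all s ≺ t in T and every S ⊆ X_t with |S| = κ there is R ⊆ S with |R| < cf(κ) such that the closure of R meets X_s in a set of cardinality κ. Then every left-separating well-ordering of X has order type at least κ·(rk(𝒯)∸1); in particular, if X is left-separated then ord_ℓ(X) ≥ κ·(rk(𝒯)∸1). -/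
universe u

open Cardinal Ordinal

/-! Fix a left-separating well-ordering and let `m t` be the least ordinal `δ` such that
`κ` points of `P t` lie below `δ`. For `s < t`, apply (S6) to the first `κ` points of `P t`:
the witness `R` has fewer than `cf κ` points, each preceded by fewer than `κ` points of `P t`,
so `R` is bounded by some `γ < m t`. Initial segments are closed, so `closure R`, and with it
`κ` points of `P s`, lies below `γ`; hence `m s ≤ γ`, while the `κ` points of `P t` in
`[γ, m t)` give `γ + κ ≤ m t`. Thus `m s + κ ≤ m t` for `s < t`, so induction on the rank
gives `κ * rk t ≤ m t`, and `rk 𝒯 ∸ 1 ≤ sup rk t`. -/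

open Set

theorem Cardinal.mk_iUnion_lt_of_lt_cof {α ι : Type u} {c : Cardinal.{u}} (hc : ℵ₀ ≤ c)
    {t : ι → Set α} (hι : #ι < c.ord.cof) (ht : ∀ i, #(t i) < c) : #(⋃ i, t i) < c :=
  (mk_iUnion_le t).trans_lt <|
    mul_lt_of_lt hc (hι.trans_le (cof_ord_le c)) (iSup_lt_of_lt_cof_ord hι ht)

namespace Ordinal

theorem mk_Ico_le (a b : Ordinal.{u}) : #(Ico a b) ≤ Cardinal.lift.{u + 1} (b - a).card := by
  rw [← Cardinal.mk_Iio_ordinal]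
  have hmaps : ∀ x : Ico a b, (x : Ordinal) - a < b - a := fun x => by
    rw [← add_lt_add_iff_left a, Ordinal.add_sub_cancel_of_le x.2.1,
      Ordinal.add_sub_cancel_of_le (x.2.1.trans x.2.2.le)]
    exact x.2.2
  refine mk_le_of_injective (f := fun x => ⟨x - a, hmaps x⟩) fun x y hxy => Subtype.ext ?_
  rw [← Ordinal.add_sub_cancel_of_le x.2.1, ← Ordinal.add_sub_cancel_of_le y.2.1]
  exact congrArg (a + ·) (congrArg Subtype.val hxy)

theorem pred_iSup_add_one_le {ι : Type u} (f : ι → Ordinal.{u}) :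
    pred (⨆ i, f i + 1) ≤ ⨆ i, f i :=
  pred_le_iff_le_succ.2 <| Ordinal.iSup_le fun i => by
    rw [← Order.succ_eq_add_one]
    exact Order.succ_le_succ (Ordinal.le_iSup f i)

end Ordinal

theorem IsWellFounded.mul_rank_le_of_add_le {α : Type u} {r : α → α → Prop}
    [IsWellFounded α r] {c : Ordinal.{u}} {g : α → Ordinal.{u}}
    (hg : ∀ a b, r a b → g a + c ≤ g b) (a : α) :
    c * rank r a ≤ g a := by
  induction a using IsWellFounded.induction r with
  | _ a ih =>
    rw [rank_eq, mul_iSup]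
    refine Ordinal.iSup_le fun b => ?_
    rw [Order.succ_eq_add_one, mul_add_one]
    exact (add_le_add_left (ih b b.2) c).trans (hg _ _ b.2)

theorem mul_pred_pordRank_le {T : Type u} [PartialOrder T] [WellFoundedLT T] {c b : Ordinal.{u}}
    (h : ∀ t, c * IsWellFounded.rank (α := T) (· < ·) t ≤ b) : c * (pordRank T).pred ≤ b :=
  calc c * (pordRank T).pred ≤ c * ⨆ t, IsWellFounded.rank (α := T) (· < ·) t :=
        mul_le_mul_right (pred_iSup_add_one_le _) c
    _ = ⨆ t, c * IsWellFounded.rank (α := T) (· < ·) t := mul_iSup c _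
    _ ≤ b := Ordinal.iSup_le h

theorem isClosed_typein_preimage_Iio {X : Type u} [TopologicalSpace X] {r : X → X → Prop}
    [IsWellOrder X r] (hr : ∀ x, IsClosed {y | r y x}) (δ : Ordinal.{u}) :
    IsClosed (typein r ⁻¹' Iio δ) := by
  rcases lt_or_ge δ (type r) with hδ | hδ
  · convert hr (enum r ⟨δ, hδ⟩) using 1
    ext y
    simp [← typein_lt_typein r]
  · convert isClosed_univ
    exact eq_univ_of_forall fun y => (typein_lt_type r y).trans_le hδ

section CardThreshold

variable {X : Type u} (f : X → Ordinal.{u}) (κ : Cardinal.{u})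

/-- Junk value `0` when `#A < κ`. -/
noncomputable def cardThreshold (A : Set X) : Ordinal.{u} :=
  sInf {δ | κ ≤ #↥(A ∩ f ⁻¹' Iio δ)}

variable {f κ} {A : Set X}

theorem cardThreshold_le {δ : Ordinal.{u}} (h : κ ≤ #↥(A ∩ f ⁻¹' Iio δ)) :
    cardThreshold f κ A ≤ δ :=
  csInf_le' h

theorem mk_lt_of_lt_cardThreshold {δ : Ordinal.{u}} (h : δ < cardThreshold f κ A) :
    #↥(A ∩ f ⁻¹' Iio δ) < κ :=
  not_le.1 (notMem_of_lt_csInf' (s := {δ | κ ≤ #↥(A ∩ f ⁻¹' Iio δ)}) h)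

theorem le_mk_cardThreshold (hA : κ ≤ #A) :
    κ ≤ #↥(A ∩ f ⁻¹' Iio (cardThreshold f κ A)) := by
  have hbound : A ⊆ f ⁻¹' Iio (Order.succ (⨆ x, f x)) := fun x _ =>
    Order.lt_succ_of_le (Ordinal.le_iSup f x)
  exact csInf_mem (s := {δ | κ ≤ #↥(A ∩ f ⁻¹' Iio δ)})
    ⟨_, show κ ≤ #↥(A ∩ _) by rwa [inter_eq_left.2 hbound]⟩

variable (hf : Function.Injective f) (hκ : ℵ₀ ≤ κ)
include hf hκ

theorem mk_inter_Iio_add_one_lt {x : X} (hx : f x < cardThreshold f κ A) :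
    #↥(A ∩ f ⁻¹' Iio (f x + 1)) < κ := by
  have hsub : A ∩ f ⁻¹' Iio (f x + 1) ⊆ insert x (A ∩ f ⁻¹' Iio (f x)) := by
    rintro y ⟨hyA, hy⟩
    rcases (Order.lt_add_one_iff.1 (show f y < f x + 1 from hy)).lt_or_eq with hlt | heq
    · exact Or.inr ⟨hyA, hlt⟩
    · exact Or.inl (hf heq)
  exact ((mk_le_mk_of_subset hsub).trans mk_insert_le).trans_lt <|
    add_lt_of_lt hκ (mk_lt_of_lt_cardThreshold hx) (one_lt_aleph0.trans_le hκ)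

theorem iSup_add_one_lt_cardThreshold (hA : κ ≤ #A) {R : Set X}
    (hR : R ⊆ A ∩ f ⁻¹' Iio (cardThreshold f κ A)) (hRκ : #R < κ.ord.cof) :
    ⨆ x : R, f x + 1 < cardThreshold f κ A := by
  by_contra! hle
  have hcover :
      A ∩ f ⁻¹' Iio (cardThreshold f κ A) ⊆ ⋃ x : R, A ∩ f ⁻¹' Iio (f x + 1) := by
    rintro y ⟨hyA, hy⟩
    obtain ⟨x, hx⟩ := Ordinal.lt_iSup_iff.1 (hy.trans_le hle)
    exact mem_iUnion.2 ⟨x, hyA, hx⟩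
  exact (le_mk_cardThreshold hA).not_gt <| (mk_le_mk_of_subset hcover).trans_lt <|
    mk_iUnion_lt_of_lt_cof hκ hRκ fun x => mk_inter_Iio_add_one_lt hf hκ (hR x.2).2

theorem add_ord_le_cardThreshold (hA : κ ≤ #A) {γ : Ordinal.{u}}
    (hγ : γ < cardThreshold f κ A) : γ + κ.ord ≤ cardThreshold f κ A := by
  set m := cardThreshold f κ A
  have hlarge : κ ≤ #↥(A ∩ f ⁻¹' Ico γ m) := by
    by_contra! hsmall
    have hsplit : A ∩ f ⁻¹' Iio m ⊆ A ∩ f ⁻¹' Iio γ ∪ A ∩ f ⁻¹' Ico γ m := by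
      rintro y ⟨hyA, hy⟩
      rcases lt_or_ge (f y) γ with h | h
      · exact Or.inl ⟨hyA, h⟩
      · exact Or.inr ⟨hyA, h, hy⟩
    exact (le_mk_cardThreshold hA).not_gt <| (mk_le_mk_of_subset hsplit).trans_lt <|
      (mk_union_le _ _).trans_lt (add_lt_of_lt hκ (mk_lt_of_lt_cardThreshold hγ) hsmall)
  have hemb : Cardinal.lift.{u + 1} #↥(A ∩ f ⁻¹' Ico γ m) ≤ #(Ico γ m) :=
    (lift_mk_le'.2 ⟨⟨fun y : ↥(A ∩ f ⁻¹' Ico γ m) => (⟨f y, y.2.2⟩ : Ico γ m),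
      fun y z h => Subtype.ext (hf (congrArg Subtype.val h))⟩⟩).trans_eq
      (Cardinal.lift_id'.{u, u + 1} _)
  have hκ_le : κ ≤ (m - γ).card :=
    hlarge.trans (lift_le.1 (hemb.trans (mk_Ico_le γ m)))
  calc γ + κ.ord ≤ γ + (m - γ) := add_le_add_right (ord_le.2 hκ_le) γ
    _ = m := Ordinal.add_sub_cancel_of_le hγ.le

theorem cardThreshold_add_ord_le [TopologicalSpace X] (hclosed : ∀ δ, IsClosed (f ⁻¹' Iio δ))
    (hA : κ ≤ #A) {B R : Set X} (hR : R ⊆ A ∩ f ⁻¹' Iio (cardThreshold f κ A))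
    (hRκ : #R < κ.ord.cof) (hRB : κ ≤ #↥(closure R ∩ B)) :
    cardThreshold f κ B + κ.ord ≤ cardThreshold f κ A := by
  set γ := ⨆ x : R, f x + 1
  have hclosure : closure R ⊆ f ⁻¹' Iio γ :=
    closure_minimal (fun x hx => (lt_add_one (f x)).trans_le
      (Ordinal.le_iSup (fun x : R => f x + 1) ⟨x, hx⟩)) (hclosed γ)
  have hB : cardThreshold f κ B ≤ γ :=
    cardThreshold_le (hRB.trans (mk_le_mk_of_subset fun x hx => ⟨hx.2, hclosure hx.1⟩))
  exact (add_le_add_left hB _).trans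
    (add_ord_le_cardThreshold hf hκ hA (iSup_add_one_lt_cardThreshold hf hκ hA hR hRκ))

end CardThreshold

theorem stmt_7_general (κ : Cardinal.{0}) (hcf : Cardinal.aleph0 < κ.ord.cof)
    (T : Type) [PartialOrder T] [WellFoundedLT T]
    (X : Type) [TopologicalSpace X]
    (P : T → Set X)
    (hsize : ∀ t, #↥(P t) = κ)
    (hS6 : ∀ s t : T, s < t → ∀ S ⊆ P t, #↥S = κ →
      ∃ R ⊆ S, #↥R < κ.ord.cof ∧ #↥(closure R ∩ P s) = κ) :
    (∀ (r : X → X → Prop) (hwo : IsWellOrder X r),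
        (∀ x : X, IsClosed {y | r y x}) →
        κ.ord * (pordRank T).pred ≤ @Ordinal.type X r hwo) ∧
    (IsLeftSeparated X → κ.ord * (pordRank T).pred ≤ ordL X) := by
  have hκ : ℵ₀ ≤ κ := hcf.le.trans (cof_ord_le κ)
  have bound : ∀ (r : X → X → Prop) (hwo : IsWellOrder X r), (∀ x, IsClosed {y | r y x}) →
      κ.ord * (pordRank T).pred ≤ @type X r hwo := by
    intro r hwo hr
    let m t := cardThreshold (typein r) κ (P t)
    have hm_le_type : ∀ t, m t ≤ type r := fun t =>
      cardThreshold_le <| by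
        rw [show typein r ⁻¹' Iio (type r) = Set.univ from eq_univ_of_forall (typein_lt_type r),
          inter_univ, hsize]
    have hstep : ∀ s t, s < t → m s + κ.ord ≤ m t := by
      intro s t hst
      have hS : #↥(P t ∩ typein r ⁻¹' Iio (m t)) = κ :=
        le_antisymm ((mk_le_mk_of_subset inter_subset_left).trans (hsize t).le)
          (le_mk_cardThreshold (hsize t).ge)
      obtain ⟨R, hRS, hRκ, hRs⟩ := hS6 s t hst _ inter_subset_left hS
      exact cardThreshold_add_ord_le (typein_injective r) hκ (isClosed_typein_preimage_Iio hr)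
        (hsize t).ge hRS hRκ hRs.ge
    exact mul_pred_pordRank_le fun t =>
      (IsWellFounded.mul_rank_le_of_add_le hstep t).trans (hm_le_type t)
  refine ⟨bound, ?_⟩
  rintro ⟨o, ho⟩
  exact le_csInf ⟨o, ho⟩ fun _ ⟨r, hwo, hr, ho'⟩ => ho' ▸ bound r hwo hr

theorem stmt_7 (κ : Cardinal.{0}) (hcf : Cardinal.aleph0 < κ.ord.cof)
    (T : Type) [PartialOrder T] [WellFoundedLT T] (hT : #T ≤ κ)
    (X : Type) [TopologicalSpace X] (hX : #X = κ)
    (P : T → Set X)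
    (hdisj : ∀ s t : T, s ≠ t → Disjoint (P s) (P t))
    (hcov : (⋃ t, P t) = Set.univ)
    (hsize : ∀ t, #↥(P t) = κ)
    (hS6 : ∀ s t : T, s < t → ∀ S ⊆ P t, #↥S = κ →
      ∃ R ⊆ S, #↥R < κ.ord.cof ∧ #↥(closure R ∩ P s) = κ) :
    (∀ (r : X → X → Prop) (hwo : IsWellOrder X r),
        (∀ x : X, IsClosed {y | r y x}) →
        κ.ord * (pordRank T).pred ≤ @Ordinal.type X r hwo) ∧
    (IsLeftSeparated X → κ.ord * (pordRank T).pred ≤ ordL X) :=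
  stmt_7_general κ hcf T X P hsize hS6
end

section
/- Assume: (S1) κ is a regular uncountable cardinal; (S2) 𝒯 = (T,⪯) is a well-founded partially ordered set with |T| ≤ κ; (S3) X ⊆ κ carries a topology τ with |X| = κ that refines the topology induced on X by the order topology of κ; (S4) {X_t : t ∈ T} is a partition of X into pieces each of cardinality κ; and (S7) for all s ≺ t in T and every S ⊆ X_t with |S| = κ, the τ-closure of S meets X_s in a set that is stationary in κ. Then every left-separating well-ordering of X has order type at least κ·(rk(𝒯)∸1); in particular, if X is left-separated then ord_ℓ(X) ≥ κ·(rk(𝒯)∸1). -/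
universe u v

open Cardinal Ordinal

/-- `C` is a closed unbounded (club) subset of the ordinal `o`. -/
def IsClubIn (C : Set Ordinal.{v}) (o : Ordinal.{v}) : Prop :=
  C ⊆ Set.Iio o ∧
  (∀ β < o, ∃ γ ∈ C, β ≤ γ) ∧
  (∀ β < o, Order.IsSuccLimit β → (∀ γ < β, ∃ δ ∈ C, γ ≤ δ ∧ δ < β) → β ∈ C)

/-- `S` is a stationary subset of the ordinal `o`: it meets every club subset of `o`. -/
def IsStationaryIn (S : Set Ordinal.{v}) (o : Ordinal.{v}) : Prop :=
  S ⊆ Set.Iio o ∧ ∀ C : Set Ordinal.{v}, IsClubIn C o → (S ∩ C).Nonempty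


/-!
Fix a left-separating well-ordering `r`. By induction along `T`, the `r`-positions of any
`A ⊆ X_t` with `|A| = κ` are not bounded below `κ · rk(t)`. For `s < t`, every `y ∈ X_s` in the
closure of `A` has a witness `x ∈ A` with `¬ r x y` and `x < y` as ordinals, because `{z | r z y}`
is closed and `{z | z ≤ y}` is open. Fodor's lemma makes one witness `x₀` serve a stationary, hence
`κ`-sized, set `F ⊆ X_s`, all of which lies `r`-below `x₀`; by induction `x₀` has position at least
`κ · rk(s)`. If the positions in `A` were bounded by `o < κ · rk(t)`, write `o = κ · q + ρ` with
`ρ < κ`, and pick `s < t` with `q ≤ rk(s)`: all but fewer than `κ` points of `A` lie below position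
`κ · q`, and the witness argument applied to them gives a contradiction.
-/

universe w

open Topology

namespace Ordinal

theorem lift_iSup_le {ι : Type*} [Small.{u} ι] {f : ι → Ordinal.{u}} {o : Ordinal.{max u v}}
    (h : ∀ i, lift.{v} (f i) ≤ o) : lift.{v} (⨆ i, f i) ≤ o := by
  by_contra! ho
  obtain ⟨o', rfl⟩ := mem_range_lift_of_le ho.le
  obtain ⟨i, hi⟩ := Ordinal.lt_iSup_iff.1 (lift_lt.1 ho)
  exact (h i).not_gt (lift_lt.2 hi)

open Order in
theorem isSuccLimit_nfp {f : Ordinal.{v} → Ordinal.{v}} (hf : ∀ α, α < f α) (a : Ordinal.{v}) :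
    IsSuccLimit (nfp f a) := by
  have hlt : ∀ n, f^[n] a < nfp f a := fun n =>
    (hf _).trans_le (Function.iterate_succ_apply' f n a ▸ iterate_le_nfp f a (n + 1))
  refine isSuccLimit_iff.2 ⟨(pos_of_gt (hlt 0)).ne', ?_⟩
  refine isSuccPrelimit_iff_succ_lt.2 fun b hb => ?_
  obtain ⟨n, hn⟩ := lt_nfp_iff.1 hb
  exact (succ_le_of_lt hn).trans_lt (hlt n)

end Ordinal

section Stationary

variable {κ : Cardinal.{v}} {o : Ordinal.{v}} {S : Set Ordinal.{v}}

theorem isClubIn_Ici_inter_Iio {β : Ordinal.{v}} (hβ : β < o) :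
    IsClubIn (Set.Ici β ∩ Set.Iio o) o := by
  refine ⟨Set.inter_subset_right, fun γ hγ => ⟨max β γ, ⟨Set.mem_Ici.2 (le_max_left _ _),
    max_lt hβ hγ⟩, le_max_right _ _⟩, fun γ hγ hlim hcof => ⟨?_, hγ⟩⟩
  obtain ⟨δ, ⟨hβδ, _⟩, _, hδγ⟩ := hcof 0 hlim.bot_lt
  exact hβδ.trans hδγ.le

theorem IsStationaryIn.exists_ge (hS : IsStationaryIn S o) {β : Ordinal.{v}} (hβ : β < o) :
    ∃ γ ∈ S, β ≤ γ :=
  let ⟨γ, hγS, hβγ, _⟩ := hS.2 _ (isClubIn_Ici_inter_Iio hβ)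
  ⟨γ, hγS, hβγ⟩

theorem IsStationaryIn.lift_le_mk (hκ : κ.IsRegular) (hS : IsStationaryIn S κ.ord) :
    Cardinal.lift.{v + 1} κ ≤ #S := by
  have hcofinal : IsCofinal (Subtype.val ⁻¹' S : Set (Set.Iio κ.ord)) := fun β =>
    let ⟨γ, hγS, hβγ⟩ := hS.exists_ge β.2
    ⟨⟨γ, hS.1 hγS⟩, hγS, hβγ⟩
  calc Cardinal.lift.{v + 1} κ = Order.cof (Set.Iio κ.ord) := by
        rw [cof_Iio, ← lift_cof, hκ.cof_ord]
    _ ≤ #(Subtype.val ⁻¹' S : Set (Set.Iio κ.ord)) := Order.cof_le hcofinal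
    _ = #S := mk_preimage_of_injective_of_subset_range _ _ Subtype.val_injective
        (Subtype.range_coe ▸ hS.1)

def diagInter (C : Ordinal.{v} → Set Ordinal.{v}) (o : Ordinal.{v}) : Set Ordinal.{v} :=
  {α | α < o ∧ ∀ ν < α, α ∈ C ν}

theorem isClubIn_diagInter (hκ : κ.IsRegular) (hunc : ℵ₀ < κ)
    {C : Ordinal.{v} → Set Ordinal.{v}} (hC : ∀ ν, IsClubIn (C ν) κ.ord) :
    IsClubIn (diagInter C κ.ord) κ.ord := by
  have hκlim : Order.IsSuccLimit κ.ord := isSuccLimit_ord hκ.aleph0_le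
  refine ⟨fun α hα => hα.1, fun β hβ => ?_, fun β hβ hlim hcof => ⟨hβ, fun ν hν => ?_⟩⟩
  · choose c hc using fun ν α => show ∃ γ, α < κ.ord → γ ∈ C ν ∧ α ≤ γ ∧ γ < κ.ord by
      by_cases hα : α < κ.ord
      · obtain ⟨γ, hγC, hαγ⟩ := (hC ν).2.1 α hα
        exact ⟨γ, fun _ => ⟨hγC, hαγ, (hC ν).1 hγC⟩⟩
      · exact ⟨0, fun h => absurd h hα⟩
    -- `g α` bounds, for every `ν < α`, a point of `C ν` above `α`; so below the closure point
    -- `nfp g β` of `g`, every `C ν` with `ν < nfp g β` is cofinal.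
    let g : Ordinal.{v} → Ordinal.{v} := fun α => max (α + 1) (⨆ ν : Set.Iio α, c ν α + 1)
    have hg_lt : ∀ α < κ.ord, g α < κ.ord := fun α hα => max_lt (hκlim.add_one_lt hα) <| by
      refine Ordinal.lift_iSup_add_one_lt_of_lt_cof ?_ fun ν => (hc ν α hα).2.2
      rw [← lift_cof, hκ.cof_ord, Cardinal.mk_Iio_ordinal]
      simpa only [Cardinal.lift_lift, Cardinal.lift_lt] using lt_ord.1 hα
    have hg_mem : ∀ α < κ.ord, ∀ ν < α, ∃ δ ∈ C ν, α ≤ δ ∧ δ < g α := fun α hα ν hν =>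
      ⟨c ν α, (hc ν α hα).1, (hc ν α hα).2.1, (Order.lt_add_one_iff.2 le_rfl).trans_le <|
        (Ordinal.le_iSup (fun ν : Set.Iio α => c ν α + 1) ⟨ν, hν⟩).trans (le_max_right _ _)⟩
    have hiter : ∀ n, g^[n] β < κ.ord := fun n => by
      induction n with
      | zero => exact hβ
      | succ n ih => rw [Function.iterate_succ_apply']; exact hg_lt _ ih
    have hnfp : nfp g β < κ.ord := nfp_lt_ord_of_isRegular hκ hunc.ne' hg_lt hβ
    refine ⟨nfp g β, ⟨hnfp, fun ν hν => ?_⟩, le_nfp g β⟩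
    refine (hC ν).2.2 _ hnfp
      (isSuccLimit_nfp (fun α => (Order.lt_add_one_iff.2 le_rfl).trans_le (le_max_left _ _)) β)
      fun γ hγ => ?_
    obtain ⟨n, hn⟩ := lt_nfp_iff.1 (max_lt hν hγ)
    obtain ⟨δ, hδC, hδ, hδg⟩ := hg_mem _ (hiter n) ν ((le_max_left _ _).trans_lt hn)
    refine ⟨δ, hδC, ((le_max_right _ _).trans hn.le).trans hδ, hδg.trans_le ?_⟩
    rw [← Function.iterate_succ_apply' g]
    exact iterate_le_nfp g β (n + 1)
  · refine (hC ν).2.2 β hβ hlim fun γ hγ => ?_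
    obtain ⟨δ, hδ, hγδ, hδβ⟩ := hcof (max γ (ν + 1)) (max_lt hγ (hlim.add_one_lt hν))
    exact ⟨δ, hδ.2 ν ((Order.lt_add_one_iff.2 le_rfl).trans_le ((le_max_right _ _).trans hγδ)),
      (le_max_left _ _).trans hγδ, hδβ⟩

theorem IsStationaryIn.exists_isStationaryIn_fiber (hκ : κ.IsRegular) (hunc : ℵ₀ < κ)
    (hS : IsStationaryIn S κ.ord) {f : Ordinal.{v} → Ordinal.{v}} (hf : ∀ α ∈ S, f α < α) :
    ∃ ν, IsStationaryIn {α ∈ S | f α = ν} κ.ord := by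
  by_contra! hfiber
  have hclub : ∀ ν, ∃ C, IsClubIn C κ.ord ∧ Disjoint {α ∈ S | f α = ν} C := fun ν => by
    have := hfiber ν
    simp only [IsStationaryIn, not_and, not_forall, Set.not_nonempty_iff_eq_empty] at this
    obtain ⟨C, hC, hdisj⟩ := this fun α hα => hS.1 hα.1
    exact ⟨C, hC, Set.disjoint_iff_inter_eq_empty.2 hdisj⟩
  choose C hC hdisj using hclub
  obtain ⟨α, hαS, hαD⟩ := hS.2 _ (isClubIn_diagInter hκ hunc hC)
  exact Set.disjoint_left.1 (hdisj (f α)) ⟨hαS, rfl⟩ (hαD.2 _ (hf α hαS))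

end Stationary

theorem exists_mem_not_rel_of_mem_closure {X : Type*} [TopologicalSpace X] {r : X → X → Prop}
    [Std.Irrefl r] {A U : Set X} {y : X} (hcl : IsClosed {z | r z y}) (hy : y ∈ closure A)
    (hU : U ∈ 𝓝 y) : ∃ x ∈ A ∩ U, ¬ r x y := by
  obtain ⟨x, ⟨hxr, hxU⟩, hxA⟩ :=
    mem_closure_iff_nhds.1 hy _ (Filter.inter_mem (hcl.isOpen_compl.mem_nhds (irrefl y)) hU)
  exact ⟨x, ⟨hxA, hxU⟩, hxr⟩

theorem setOf_val_le_mem_nhds {X : Set Ordinal.{v}} {τ : TopologicalSpace X}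
    (hτ : τ ≤ TopologicalSpace.induced Subtype.val (Preorder.topology Ordinal.{v})) (y : X) :
    {x : X | x.val ≤ y.val} ∈ @nhds X τ y := by
  refine nhds_mono hτ ?_
  rw [nhds_induced]
  have hIic : Set.Iic y.val ∈ 𝓝 y.val :=
    Order.Iio_succ y.val ▸ isOpen_Iio.mem_nhds (Set.mem_Iio.2 (Order.lt_succ _))
  exact Filter.preimage_mem_comap hIic

section PressingDown

variable {κ : Cardinal.{v}} {X : Set Ordinal.{v}} [TopologicalSpace X] {r : X → X → Prop}
  [IsWellOrder X r]

theorem exists_large_subset_rel_of_isStationaryIn (hκ : κ.IsRegular) (hunc : ℵ₀ < κ)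
    (hcl : ∀ x, IsClosed {y | r y x}) (hnhds : ∀ y : X, {x : X | x.val ≤ y.val} ∈ 𝓝 y)
    {A B : Set X} (hAB : Disjoint A B)
    (hstat : IsStationaryIn (Subtype.val '' (closure A ∩ B)) κ.ord) :
    ∃ x₀ ∈ A, ∃ F ⊆ B, Cardinal.lift.{v + 1} κ ≤ #F ∧ ∀ y ∈ F, r y x₀ := by
  have hwit : ∀ y ∈ closure A ∩ B, ∃ x ∈ A, ¬ r x y ∧ x.val < y.val := fun y hy => by
    obtain ⟨x, ⟨hxA, hxy⟩, hxr⟩ := exists_mem_not_rel_of_mem_closure (hcl y) hy.1 (hnhds y)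
    exact ⟨x, hxA, hxr, hxy.lt_of_ne (Subtype.val_injective.ne (hAB.ne_of_mem hxA hy.2))⟩
  choose! w hwA hwr hwlt using hwit
  let f := Function.extend Subtype.val (fun y : X => (w y).val) fun _ => 0
  have hf : ∀ y : X, f y.val = (w y).val := fun y => Subtype.val_injective.extend_apply _ _ y
  obtain ⟨ν, hν⟩ := hstat.exists_isStationaryIn_fiber hκ hunc (f := f) <| by
    rintro _ ⟨y, hy, rfl⟩
    rw [hf]
    exact hwlt y hy
  let F := {y ∈ closure A ∩ B | (w y).val = ν}
  have hFκ : Cardinal.lift.{v + 1} κ ≤ #F := by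
    refine (hν.lift_le_mk hκ).trans <|
      (mk_le_mk_of_subset ?_).trans (mk_image_le (f := Subtype.val))
    rintro _ ⟨⟨y, hy, rfl⟩, hfy⟩
    exact ⟨y, ⟨hy, hf y ▸ hfy⟩, rfl⟩
  obtain ⟨y₀, hy₀⟩ : F.Nonempty := Set.nonempty_iff_ne_empty.2 fun hF => by
    simp [hF, hκ.pos.ne'] at hFκ
  refine ⟨w y₀, hwA y₀ hy₀.1, F, fun y hy => hy.1.2, hFκ, fun y hy => ?_⟩
  have hwy : w y = w y₀ := Subtype.val_injective (hy.2.trans hy₀.2.symm)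
  rcases trichotomous_of r y (w y₀) with h | h | h
  · exact h
  · exact absurd (h ▸ hy.1.2) (hAB.notMem_of_mem_left (hwA y₀ hy₀.1))
  · exact absurd (hwy ▸ h) (hwr y hy.1)

end PressingDown

section RankInduction

variable {α : Type u} {r : α → α → Prop} [IsWellOrder α r] {κ : Cardinal.{u}}

theorem mk_setOf_typein_mem_Ico_le (a b : Ordinal.{u}) :
    #{x | typein r x ∈ Set.Ico a b} ≤ (b - a).card := by
  have hsub : ∀ x : {x | typein r x ∈ Set.Ico a b}, typein r x - a < b - a := fun x => by
    rw [sub_lt_of_le x.2.1, Ordinal.add_sub_cancel_of_le (x.2.1.trans x.2.2.le)]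
    exact x.2.2
  refine (mk_le_of_injective (f := fun x : {x | typein r x ∈ Set.Ico a b} =>
    ToType.mk ⟨typein r x - a, hsub x⟩) fun x y hxy => ?_).trans_eq (mk_toType _)
  have hxy : typein r x - a = typein r y - a := congrArg Subtype.val (ToType.mk.injective hxy)
  exact Subtype.ext (typein_injective r (by
    rw [← Ordinal.add_sub_cancel_of_le x.2.1, ← Ordinal.add_sub_cancel_of_le y.2.1, hxy]))

theorem le_mk_setOf_typein_lt_ord_mul_div (hκ : ℵ₀ ≤ κ) {A : Set α} (hA : κ ≤ #A)
    {o : Ordinal.{u}} (ho : ∀ x ∈ A, typein r x < o) :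
    κ ≤ #{x ∈ A | typein r x < κ.ord * (o / κ.ord)} := by
  have hκ₀ : κ.ord ≠ 0 := ord_eq_zero.not.2 (aleph0_pos.trans_le hκ).ne'
  have htail : #{x | typein r x ∈ Set.Ico (κ.ord * (o / κ.ord)) o} < κ := by
    refine (mk_setOf_typein_mem_Ico_le _ _).trans_lt (lt_ord.1 ?_)
    rw [← mod_def]
    exact mod_lt o hκ₀
  have hsplit : A ⊆ {x ∈ A | typein r x < κ.ord * (o / κ.ord)} ∪
      {x | typein r x ∈ Set.Ico (κ.ord * (o / κ.ord)) o} := fun x hx =>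
    (lt_or_ge _ _).imp (fun h => ⟨hx, h⟩) fun h => ⟨h, ho x hx⟩
  by_contra! hhead
  exact (hA.trans ((mk_le_mk_of_subset hsplit).trans (mk_union_le _ _))).not_gt
    (add_lt_of_lt hκ hhead htail)

theorem ord_mul_le_of_exists_large_subset_rel {T : Type w} [Preorder T] [WellFoundedLT T]
    (hκ : ℵ₀ ≤ κ) {P : T → Set α} {ρ : T → Ordinal.{u}}
    (hρ : ∀ t, ∀ q < ρ t, ∃ s < t, q ≤ ρ s)
    (hP : ∀ s t, s < t → ∀ A ⊆ P t, #A = κ → ∃ x₀ ∈ A, ∃ F ⊆ P s, κ ≤ #F ∧ ∀ y ∈ F, r y x₀)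
    (t : T) {A : Set α} (hAP : A ⊆ P t) (hA : κ ≤ #A) {o : Ordinal.{u}}
    (ho : ∀ x ∈ A, typein r x < o) : κ.ord * ρ t ≤ o := by
  induction t using WellFoundedLT.induction generalizing A o with
  | _ t ih =>
  by_contra! hlt
  have hκ₀ : κ.ord ≠ 0 := ord_eq_zero.not.2 (aleph0_pos.trans_le hκ).ne'
  obtain ⟨s, hst, hρs⟩ := hρ t (o / κ.ord) ((lt_mul_iff_div_lt hκ₀).1 hlt)
  obtain ⟨A', hA'sub, hA'⟩ :=
    le_mk_iff_exists_subset.1 (le_mk_setOf_typein_lt_ord_mul_div hκ hA ho)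
  obtain ⟨x₀, hx₀, F, hFP, hF, hFx₀⟩ := hP s t hst A' (fun x hx => hAP (hA'sub hx).1) hA'
  have hx₀s : κ.ord * ρ s ≤ typein r x₀ :=
    ih s hst hFP hF fun y hy => (typein_lt_typein r).2 (hFx₀ y hy)
  exact (hx₀s.trans_lt (hA'sub hx₀).2).not_ge (mul_le_mul_right hρs _)

end RankInduction

section Rank

variable {T : Type w} [PartialOrder T] [WellFoundedLT T]

theorem exists_lt_le_lift_rank {t : T} {q : Ordinal.{max w u}}
    (hq : q < Ordinal.lift.{u} (IsWellFounded.rank (α := T) (· < ·) t)) :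
    ∃ s < t, q ≤ Ordinal.lift.{u} (IsWellFounded.rank (α := T) (· < ·) s) := by
  obtain ⟨q, rfl⟩ := mem_range_lift_of_le hq.le
  rw [Ordinal.lift_lt, IsWellFounded.rank_eq] at hq
  obtain ⟨⟨s, hst⟩, hqs⟩ := Ordinal.lt_iSup_iff.1 hq
  exact ⟨s, hst, Ordinal.lift_le.2 (Order.lt_succ_iff.1 hqs)⟩

theorem mul_pred_pordRank_le_iSup (a : Ordinal.{w}) :
    a * (pordRank T).pred ≤ ⨆ t, a * IsWellFounded.rank (α := T) (· < ·) t := by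
  rcases eq_or_ne a 0 with rfl | ha
  · simp
  rcases isEmpty_or_nonempty T with hT | hT
  · simp [pordRank]
  rw [← (isNormal_mul_right ha.bot_lt).map_iSup bddAbove_of_small]
  refine mul_le_mul_right (pred_le_iff_le_succ.2 (Ordinal.iSup_le fun t => ?_)) a
  rw [← Order.succ_eq_add_one]
  exact Order.succ_le_succ (Ordinal.le_iSup _ t)

end Rank

theorem stmt_8_general (κ : Cardinal.{0}) (hreg : κ.IsRegular) (hunc : Cardinal.aleph0 < κ)
    (X : Set Ordinal.{0})
    (τ : TopologicalSpace ↥X)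
    (hτ : τ ≤ TopologicalSpace.induced (Subtype.val : ↥X → Ordinal.{0})
      (Preorder.topology Ordinal.{0}))
    (T : Type) [PartialOrder T] [WellFoundedLT T]
    (P : T → Set ↥X)
    (hdisj : ∀ s t : T, s ≠ t → Disjoint (P s) (P t))
    (hsize : ∀ t, #↥(P t) = Cardinal.lift.{1} κ)
    (hS7 : ∀ s t : T, s < t → ∀ S ⊆ P t, #↥S = Cardinal.lift.{1} κ →
      IsStationaryIn (Subtype.val '' (@closure _ τ S ∩ P s)) κ.ord) :
    (∀ (r : ↥X → ↥X → Prop) (hwo : IsWellOrder ↥X r),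
        (∀ x : ↥X, @IsClosed _ τ {y | r y x}) →
        Ordinal.lift.{1} (κ.ord * (pordRank T).pred) ≤ @Ordinal.type ↥X r hwo) ∧
    (@IsLeftSeparated ↥X τ →
        Ordinal.lift.{1} (κ.ord * (pordRank T).pred) ≤ @ordL ↥X τ) := by
  have htype : ∀ (r : ↥X → ↥X → Prop) (hwo : IsWellOrder ↥X r),
      (∀ x : ↥X, @IsClosed _ τ {y | r y x}) →
      Ordinal.lift.{1} (κ.ord * (pordRank T).pred) ≤ @Ordinal.type ↥X r hwo := by
    intro r hwo hcl
    let _ := τ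
    have hdescend : ∀ s t : T, s < t → ∀ A ⊆ P t, #A = Cardinal.lift.{1} κ →
        ∃ x₀ ∈ A, ∃ F ⊆ P s, Cardinal.lift.{1} κ ≤ #F ∧ ∀ y ∈ F, r y x₀ :=
      fun s t hst A hA hAκ => exists_large_subset_rel_of_isStationaryIn hreg hunc hcl
        (setOf_val_le_mem_nhds hτ) ((hdisj s t hst.ne).symm.mono_left hA) (hS7 s t hst A hA hAκ)
    have hpiece (t : T) :
        Ordinal.lift.{1} (κ.ord * IsWellFounded.rank (α := T) (· < ·) t) ≤ type r := by
      rw [Ordinal.lift_mul, lift_ord]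
      exact ord_mul_le_of_exists_large_subset_rel (aleph0_le_lift.2 hreg.aleph0_le)
        (fun t q hq => exists_lt_le_lift_rank hq) hdescend t subset_rfl (hsize t).ge
        fun x _ => typein_lt_type r x
    exact (Ordinal.lift_le.2 (mul_pred_pordRank_le_iSup κ.ord)).trans (Ordinal.lift_iSup_le hpiece)
  refine ⟨htype, fun ⟨o, ho⟩ => le_csInf ⟨o, ho⟩ ?_⟩
  rintro _ ⟨r, hwo, hcl, rfl⟩
  exact htype r hwo hcl

theorem stmt_8 (κ : Cardinal.{0}) (hreg : κ.IsRegular) (hunc : Cardinal.aleph0 < κ)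
    (X : Set Ordinal.{0}) (hXsub : X ⊆ Set.Iio κ.ord)
    (hXcard : #↥X = Cardinal.lift.{1} κ)
    (τ : TopologicalSpace ↥X)
    (hτ : τ ≤ TopologicalSpace.induced (Subtype.val : ↥X → Ordinal.{0})
      (Preorder.topology Ordinal.{0}))
    (T : Type) [PartialOrder T] [WellFoundedLT T] (hT : #T ≤ κ)
    (P : T → Set ↥X)
    (hdisj : ∀ s t : T, s ≠ t → Disjoint (P s) (P t))
    (hcov : (⋃ t, P t) = Set.univ)
    (hsize : ∀ t, #↥(P t) = Cardinal.lift.{1} κ)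
    (hS7 : ∀ s t : T, s < t → ∀ S ⊆ P t, #↥S = Cardinal.lift.{1} κ →
      IsStationaryIn (Subtype.val '' (@closure _ τ S ∩ P s)) κ.ord) :
    (∀ (r : ↥X → ↥X → Prop) (hwo : IsWellOrder ↥X r),
        (∀ x : ↥X, @IsClosed _ τ {y | r y x}) →
        Ordinal.lift.{1} (κ.ord * (pordRank T).pred) ≤ @Ordinal.type ↥X r hwo) ∧
    (@IsLeftSeparated ↥X τ →
        Ordinal.lift.{1} (κ.ord * (pordRank T).pred) ≤ @ordL ↥X τ) :=
  stmt_8_general κ hreg hunc X τ hτ T P hdisj hsize hS7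
end

section
/- There exist two dense subspaces A and B of the product space 2^𝔠 (where 𝔠 = 2^ℵ₀) such that both A and B are left-separated but the subspace A ∪ B is not left-separated. -/
universe u

open Cardinal Ordinal

/-- The Cantor cube `2^𝔠` where `𝔠 = 2^ℵ₀`, realized as all functions from
`{ν | ν < 𝔠}` to `Bool`, with the product topology (where `Bool` is discrete). -/
abbrev CantorCubeContinuum : Type 1 :=
  ↥(Set.Iio ((2 ^ Cardinal.aleph0 : Cardinal.{0}).ord)) → Bool

/-!
`A` is a countable dense subset of `2^𝔠` (Hewitt–Marczewski–Pondiczery), left-separated by any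
injection into `ℕ`. `B` is built by a transfinite recursion of length `𝔠` over the countable
partial functions: the point for a pattern extends it and is the first point of `B` to be `true`
at a fresh coordinate, so `B` is left-separated and meets every set cut out by countably many
coordinates. Hence `A ∪ B` is a Baire space, and it is separable, `T₁` and has no isolated
points. Such a space is not left-separated: for a left-separating order the countable dense set
is cofinal in every open set, so by Baire some closed initial segment `[⊥, d]` has interior;
for the least such `d`, that interior minus `d` is a nonempty open subset of `[⊥, d)`, which
contains a smaller such `d'`.
-/

open Set Filter Topology TopologicalSpace Function

section LeftSeparated

variable {X : Type u} [TopologicalSpace X]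

theorem isLeftSeparated_of_injective {Q : Type*} [LinearOrder Q] [WellFoundedLT Q] (f : X → Q)
    (hf : Injective f) (hclosed : ∀ x, IsClosed {y | f y < f x}) : IsLeftSeparated X :=
  ⟨_, f ⁻¹'o (· < ·), (RelEmbedding.preimage ⟨f, hf⟩ (· < ·)).isWellOrder, hclosed, rfl⟩

theorem isLeftSeparated_of_countable [T1Space X] [Countable X] : IsLeftSeparated X := by
  obtain ⟨f, hf⟩ := exists_injective_nat X
  exact isLeftSeparated_of_injective f hf fun x =>
    ((finite_Iio (f x)).preimage hf.injOn).isClosed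

theorem isLeftSeparated_range {Q : Type*} [LinearOrder Q] [WellFoundedLT Q] (b : Q → X)
    (U : Q → Set X) (hU : ∀ p, IsOpen (U p)) (hbU : ∀ p, b p ∈ U p)
    (hlt : ∀ p q, q < p → b q ∉ U p) : IsLeftSeparated (range b) := by
  have hb : Injective b := fun p q h => by
    by_contra hne
    rcases lt_or_gt_of_ne hne with hpq | hqp
    · exact hlt q p hpq (h ▸ hbU q)
    · exact hlt p q hqp (h ▸ hbU p)
  set e := Equiv.ofInjective b hb
  refine isLeftSeparated_of_injective e.symm e.symm.injective fun x => ?_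
  rw [← isOpen_compl_iff, isOpen_iff_forall_mem_open]
  intro y hy
  have hbe : ∀ z, b (e.symm z) = z := Equiv.apply_ofInjective_symm hb
  refine ⟨Subtype.val ⁻¹' U (e.symm y), fun z hz => ?_, (hU _).preimage continuous_subtype_val,
    show y.val ∈ _ from hbe y ▸ hbU (e.symm y)⟩
  simp only [mem_compl_iff, mem_ofPred_eq, not_lt] at hy ⊢
  exact hy.trans (not_lt.1 fun h => hlt _ _ h ((hbe z).symm ▸ hz))

end LeftSeparated

theorem exists_mem_inter_interior_of_subset_biUnion {X β : Type*} [TopologicalSpace X]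
    [BaireSpace X] {U : Set X} (hU : IsOpen U) (hne : U.Nonempty) {S : Set β} (hS : S.Countable)
    {F : β → Set X} (hF : ∀ i ∈ S, IsClosed (F i)) (hcov : U ⊆ ⋃ i ∈ S, F i) :
    ∃ i ∈ S, (U ∩ interior (F i)).Nonempty := by
  obtain ⟨i₀, hi₀⟩ : S.Nonempty := by
    obtain ⟨x, hx⟩ := hne
    obtain ⟨i, hi, -⟩ := mem_iUnion₂.1 (hcov hx)
    exact ⟨i, hi⟩
  have hdense : Dense (⋃ i ∈ S, interior (F i ∪ Uᶜ)) := by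
    refine dense_biUnion_interior_of_closed (fun i hi => (hF i hi).union hU.isClosed_compl) hS ?_
    refine eq_univ_of_forall fun x => ?_
    by_cases hx : x ∈ U
    · obtain ⟨i, hi, hxi⟩ := mem_iUnion₂.1 (hcov hx)
      exact mem_iUnion₂.2 ⟨i, hi, Or.inl hxi⟩
    · exact mem_iUnion₂.2 ⟨i₀, hi₀, Or.inr hx⟩
  obtain ⟨x, hxU, hx⟩ := hdense.inter_open_nonempty U hU hne
  obtain ⟨i, hi, hxi⟩ := mem_iUnion₂.1 hx
  -- inside `U` the set `F i ∪ Uᶜ` is just `F i`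
  refine ⟨i, hi, x, hxU, interior_maximal (fun y hy => ?_) (isOpen_interior.inter hU) ⟨hxi, hxU⟩⟩
  exact (interior_subset hy.1).resolve_right (not_not.2 hy.2)

theorem Dense.perfectSpace_subtype {X : Type*} [TopologicalSpace X] [T1Space X] [PerfectSpace X]
    {Y : Set X} (hY : Dense Y) : PerfectSpace Y := by
  refine perfectSpace_iff_forall_not_isolated.2 fun y => ?_
  rw [← mem_closure_iff_nhdsWithin_neBot, closure_subtype]
  have hdense : Dense (Y ∩ {(y : X)}ᶜ) :=
    hY.inter_of_isOpen_right (dense_compl_singleton _) isOpen_compl_singleton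
  refine closure_mono (fun x hx => ?_) (hdense.closure_eq ▸ mem_univ _)
  exact ⟨⟨x, hx.1⟩, fun h => hx.2 (congrArg Subtype.val h), rfl⟩

theorem Set.Countable.separableSpace_of_subset_closure {X : Type*} [TopologicalSpace X]
    {A Y : Set X} (hA : A.Countable) (hAY : A ⊆ Y) (hYA : Y ⊆ closure A) : SeparableSpace Y :=
  ⟨⟨Subtype.val ⁻¹' A, hA.preimage Subtype.val_injective,
    Subtype.dense_iff.2 (by rwa [Subtype.image_preimage_coe, inter_eq_right.2 hAY])⟩⟩

theorem not_isLeftSeparated_of_baireSpace {X : Type u} [TopologicalSpace X] [T1Space X]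
    [BaireSpace X] [SeparableSpace X] [PerfectSpace X] [Nonempty X] : ¬ IsLeftSeparated X := by
  rintro ⟨-, r, hr, hclosed, -⟩
  obtain ⟨D, hDc, hDd⟩ := exists_countable_dense X
  have hinterior : ∀ U : Set X, IsOpen U → U.Nonempty →
      ∃ d ∈ U, (interior (insert d {y | r y d})).Nonempty := by
    intro U hU hne
    have hcov : U ⊆ ⋃ d ∈ D ∩ U, insert d {y | r y d} := by
      -- a point of `U` above all of `D ∩ U` would be in the closure of its own initial segment
      intro x hx
      by_contra hx'
      simp only [mem_iUnion₂, mem_insert_iff, mem_ofPred_eq, not_exists] at hx'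
      have hsub : U ∩ D ⊆ {y | r y x} := fun d hd =>
        (trichotomous_of r d x).resolve_right fun h => hx' d ⟨hd.2, hd.1⟩ (h.imp Eq.symm id)
      exact irrefl x ((hclosed x).closure_subset_iff.2 hsub (hDd.open_subset_closure_inter hU hx))
    have hFclosed : ∀ d ∈ D ∩ U, IsClosed (insert d {y | r y d}) := fun d _ =>
      insert_eq d _ ▸ isClosed_singleton.union (hclosed d)
    obtain ⟨d, hd, hint⟩ := exists_mem_inter_interior_of_subset_biUnion hU hne
      (hDc.mono inter_subset_left) hFclosed hcov
    exact ⟨d, hd.2, hint.mono inter_subset_right⟩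
  obtain ⟨d, hd, hmin⟩ := hr.wf.has_min {d | (interior (insert d {y | r y d})).Nonempty}
    (let ⟨d, _, hd⟩ := hinterior univ isOpen_univ univ_nonempty; ⟨d, hd⟩)
  have hV : IsOpen (interior (insert d {y | r y d}) \ {d}) :=
    isOpen_interior.sdiff isClosed_singleton
  have hVne : (interior (insert d {y | r y d}) \ {d}).Nonempty := by
    refine nonempty_iff_ne_empty.2 fun h => not_isOpen_singleton d ?_
    rw [← (Nonempty.subset_singleton_iff hd).1 (sdiff_eq_empty.1 h)]
    exact isOpen_interior
  obtain ⟨d', ⟨hd'int, hd'd⟩, hd'⟩ := hinterior _ hV hVne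
  exact hmin d' hd' ((interior_subset hd'int).resolve_left hd'd)

section Patterns

variable {ι α : Type*}

-- In `ι → Bool` these are exactly the sets meeting every nonempty `Gδ` set.
def IsCountablyDense (Y : Set (ι → α)) : Prop :=
  ∀ s : Set ι, s.Countable → ∀ g : ι → α, ∃ y ∈ Y, EqOn y g s

theorem IsCountablyDense.mono {Y Z : Set (ι → α)} (hY : IsCountablyDense Y) (hYZ : Y ⊆ Z) :
    IsCountablyDense Z := fun s hs g =>
  let ⟨y, hy, hyg⟩ := hY s hs g; ⟨y, hYZ hy, hyg⟩

variable [TopologicalSpace α]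

theorem exists_finset_eqOn_subset_of_mem_nhds {x : ι → α} {W : Set (ι → α)} (hW : W ∈ 𝓝 x) :
    ∃ I : Finset ι, {z | EqOn z x I} ⊆ W := by
  rw [nhds_pi, Filter.mem_pi'] at hW
  obtain ⟨I, t, ht, htW⟩ := hW
  exact ⟨I, fun z hz => htW fun i hi => (hz hi).symm ▸ mem_of_mem_nhds (ht i)⟩

theorem exists_countable_eqOn_subset_iInter_of_mem_nhds {x : ι → α} {W : ℕ → Set (ι → α)}
    (hW : ∀ n, W n ∈ 𝓝 x) : ∃ s : Set ι, s.Countable ∧ {z | EqOn z x s} ⊆ ⋂ n, W n := by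
  choose I hI using fun n => exists_finset_eqOn_subset_of_mem_nhds (hW n)
  refine ⟨⋃ n, I n, countable_iUnion fun n => (I n).countable_toSet, fun z hz => ?_⟩
  exact mem_iInter.2 fun n => hI n (hz.mono (subset_iUnion (fun n => (I n : Set ι)) n))

theorem dense_of_forall_finset_exists_eqOn {Y : Set (ι → α)}
    (hY : ∀ (I : Finset ι) (g : ι → α), ∃ y ∈ Y, EqOn y g I) : Dense Y := by
  refine dense_iff_inter_open.2 fun W hW ⟨x, hx⟩ => ?_
  obtain ⟨I, hI⟩ := exists_finset_eqOn_subset_of_mem_nhds (hW.mem_nhds hx)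
  obtain ⟨y, hy, hyx⟩ := hY I x
  exact ⟨y, hI hyx, hy⟩

theorem IsCountablyDense.dense {Y : Set (ι → α)} (hY : IsCountablyDense Y) : Dense Y :=
  dense_of_forall_finset_exists_eqOn fun I => hY I I.countable_toSet

/-- A point of `⋂ n, W n` lies in a set cut out by countably many coordinates inside it,
and `Y` meets that set. -/
theorem IsCountablyDense.baireSpace [BaireSpace (ι → α)] {Y : Set (ι → α)}
    (hY : IsCountablyDense Y) : BaireSpace Y := by
  refine ⟨fun f hfo hfd => dense_iff_inter_open.2 fun U hU ⟨y, hy⟩ => ?_⟩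
  choose W hWo hWd hWf using fun n =>
    exists_open_dense_of_open_dense_subtype hY.dense (hfo n) (hfd n)
  obtain ⟨O, hO, rfl⟩ := isOpen_induced_iff.1 hU
  obtain ⟨x, hxO, hxW⟩ := (dense_iInter_of_isOpen_nat hWo hWd).inter_open_nonempty O hO ⟨y, hy⟩
  obtain ⟨s, hs, hsub⟩ := exists_countable_eqOn_subset_iInter_of_mem_nhds fun n =>
    inter_mem (hO.mem_nhds hxO) ((hWo n).mem_nhds (mem_iInter.1 hxW n))
  obtain ⟨z, hzY, hzx⟩ := hY s hs x
  have hz : ∀ n, z ∈ O ∩ W n := mem_iInter.1 (hsub hzx)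
  exact ⟨⟨z, hzY⟩, (hz 0).1, mem_iInter.2 fun n => hWf n ▸ (hz n).2⟩

theorem perfectSpace_pi [Infinite ι] [Nontrivial α] : PerfectSpace (ι → α) := by
  refine perfectSpace_iff_forall_not_isolated.2 fun x => nhdsWithin_neBot.2 fun W hW => ?_
  obtain ⟨I, hI⟩ := exists_finset_eqOn_subset_of_mem_nhds hW
  obtain ⟨i, hi⟩ := Infinite.exists_notMem_finset I
  obtain ⟨a, ha⟩ := exists_ne (x i)
  classical
  refine ⟨update x i a, hI fun j hj => update_of_ne ?_ _ _, fun h => ha ?_⟩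
  · rintro rfl; exact hi hj
  · simpa using congrFun h i

end Patterns

theorem Set.Finite.exists_injOn_restrict_fin {β : Type*} {S : Set (ℕ → β)} (hS : S.Finite) :
    ∃ N, S.InjOn fun x (k : Fin N) => x k := by
  have : ∀ᶠ N in atTop, ∀ x ∈ S, ∀ y ∈ S,
      (fun k : Fin N => x k) = (fun k : Fin N => y k) → x = y := by
    refine (eventually_all_finite hS).2 fun x _ => (eventually_all_finite hS).2 fun y _ => ?_
    by_cases hxy : x = y
    · exact .of_forall fun _ _ => hxy
    obtain ⟨n, hn⟩ := Function.ne_iff.1 hxy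
    filter_upwards [eventually_gt_atTop n] with N hN h
    exact absurd (congrFun h ⟨n, hN⟩) hn
  obtain ⟨N, hN⟩ := this.exists
  exact ⟨N, fun x hx y hy => hN x hx y hy⟩

/-- Hewitt–Marczewski–Pondiczery: the points `i ↦ φ (e i ↾ N)` for `φ : (Fin N → Bool) → α`
form a countable dense set. -/
theorem separableSpace_pi_of_injective {ι α : Type*} [TopologicalSpace α] [Countable α]
    [Nonempty ι] {e : ι → ℕ → Bool} (he : Injective e) : SeparableSpace (ι → α) := by
  let point : (Σ N, (Fin N → Bool) → α) → ι → α := fun φ i => φ.2 fun k => e i k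
  refine ⟨range point, countable_range point, dense_of_forall_finset_exists_eqOn fun I g => ?_⟩
  obtain ⟨N, hN⟩ := (I.finite_toSet.image e).exists_injOn_restrict_fin
  have hinj : InjOn (fun i (k : Fin N) => e i k) I := hN.comp he.injOn (mapsTo_image e I)
  exact ⟨point ⟨N, g ∘ invFunOn _ I⟩, mem_range_self _, fun i hi =>
    congrArg g (hinj.leftInvOn_invFunOn hi)⟩

theorem exists_injective_forall_notMem {Q ι : Type u} [LinearOrder Q] [WellFoundedLT Q]
    [Infinite ι] (hQ : ∀ p : Q, #(Iio p) < #ι) (D : Q → Set ι) (hD : ∀ p, #(D p) < #ι) :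
    ∃ ν : Q → ι, Injective ν ∧ ∀ p, ν p ∉ D p := by
  have hfresh : ∀ p (prior : ∀ q, q < p → ι), ∃ i, i ∉ D p ∧ ∀ q hq, prior q hq ≠ i := by
    intro p prior
    let S : Set ι := D p ∪ range fun q : Iio p => prior q q.2
    have hS : #S < #ι := (mk_union_le _ _).trans_lt
      (add_lt_of_lt (aleph0_le_mk ι) (hD p) (mk_range_le.trans_lt (hQ p)))
    obtain ⟨i, hi⟩ : Sᶜ.Nonempty := nonempty_compl.2 fun h => by
      rw [h, mk_univ] at hS
      exact hS.false
    simp only [S, mem_compl_iff, mem_union, mem_range, not_or, not_exists] at hi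
    exact ⟨i, hi.1, fun q hq => hi.2 ⟨q, hq⟩⟩
  choose step hstep using hfresh
  let ν : Q → ι := wellFounded_lt.fix step
  have hν : ∀ p, ν p = step p fun q _ => ν q := wellFounded_lt.fix_eq step
  have hlt : ∀ p q, q < p → ν q ≠ ν p := fun p q hqp => by
    rw [hν p]; exact (hstep p fun q _ => ν q).2 q hqp
  refine ⟨ν, fun p q h => ?_, fun p => by rw [hν p]; exact (hstep p fun q _ => ν q).1⟩
  by_contra hne
  rcases lt_or_gt_of_ne hne with hpq | hqp
  · exact hlt q p hpq h
  · exact hlt p q hqp h.symm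

theorem mk_nat_arrow_prod_bool_le {ι : Type u} (hι : ℵ₀ ≤ #ι) (hpow : #ι ^ ℵ₀ ≤ #ι) :
    #(ℕ → ι × Bool) ≤ #ι := by
  have h2 : #ι * 2 = #ι :=
    Cardinal.mul_eq_left hι ((natCast_lt_aleph0 (n := 2)).le.trans hι) two_ne_zero
  simpa [mk_arrow, h2] using hpow

theorem exists_isLeftSeparated_isCountablyDense {ι : Type u} (hι : ℵ₀ < #ι)
    (hpow : #ι ^ ℵ₀ ≤ #ι) : ∃ B : Set (ι → Bool), IsLeftSeparated B ∧ IsCountablyDense B := by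
  classical
  have : Infinite ι := infinite_iff.2 hι.le
  -- `p : ℕ → ι × Bool` encodes the countable partial function `(p n).1 ↦ (p n).2`
  obtain ⟨_, _, hQ⟩ := exists_ord_eq_type_lt (ℕ → ι × Bool)
  have hIio : ∀ p : ℕ → ι × Bool, #(Iio p) < #ι := fun p =>
    (mk_Iio_lt p hQ).trans_le (mk_nat_arrow_prod_bool_le hι.le hpow)
  let dom (p : ℕ → ι × Bool) : Set ι := range fun n => (p n).1
  have hdom : ∀ p, #(dom p) ≤ ℵ₀ := fun p => mk_le_aleph0_iff.2 (countable_range _).to_subtype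
  have hD : ∀ p, #↥(dom p ∪ ⋃ q : Iio p, dom q) < #ι := fun p => by
    refine (mk_union_le _ _).trans_lt (add_lt_of_lt hι.le ((hdom p).trans_lt hι) ?_)
    refine (mk_iUnion_le _).trans_lt (mul_lt_of_lt hι.le (hIio p) ?_)
    exact (ciSup_le' fun q : Iio p => hdom q).trans_lt hι
  obtain ⟨ν, hν, hνdom⟩ := exists_injective_forall_notMem hIio _ hD
  let b (p : ℕ → ι × Bool) : ι → Bool := fun i => decide (i = ν p ∨ (i, true) ∈ range p)
  refine ⟨range b, isLeftSeparated_range b (fun p => {x | x (ν p) = true})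
    (fun p => (isOpen_discrete {true}).preimage
      (continuous_apply (ν p) : Continuous fun x : ι → Bool => x (ν p))) (fun p => by simp [b])
    (fun p q hqp h => ?_), fun s hs g => ?_⟩
  · simp only [b, mem_ofPred_eq, decide_eq_true_eq] at h
    rcases h with h | ⟨n, hn⟩
    · exact hqp.ne (hν h.symm)
    · exact hνdom p (Or.inr (mem_iUnion.2 ⟨⟨q, hqp⟩, n, by simp [hn]⟩))
  · obtain ⟨f, hf⟩ := countable_iff_exists_subset_range.1 hs
    let p : ℕ → ι × Bool := fun n => (f n, g (f n))
    refine ⟨b p, mem_range_self p, fun i hi => ?_⟩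
    obtain ⟨n, rfl⟩ := hf hi
    have hne : f n ≠ ν p := fun h => hνdom p (Or.inl ⟨n, h⟩)
    have hpat : (∃ m, f m = f n ∧ g (f m) = true) ↔ g (f n) = true :=
      ⟨fun ⟨m, hm, h⟩ => hm ▸ h, fun h => ⟨n, rfl, h⟩⟩
    simp only [b, p, hne, false_or, mem_range, Prod.mk.injEq]
    exact Bool.eq_iff_iff.2 (decide_eq_true_iff.trans hpat)

theorem exists_dense_isLeftSeparated_not_isLeftSeparated_union {ι : Type u} (hι : #ι = 𝔠) :
    ∃ A B : Set (ι → Bool), Dense A ∧ Dense B ∧ IsLeftSeparated A ∧ IsLeftSeparated B ∧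
      ¬ IsLeftSeparated ↥(A ∪ B) := by
  have hℵ : ℵ₀ < #ι := hι ▸ aleph0_lt_continuum
  have : Infinite ι := infinite_iff.2 hℵ.le
  obtain ⟨e⟩ : Nonempty (ι ↪ (ℕ → Bool)) := lift_mk_le'.1 (by simp [hι])
  have := separableSpace_pi_of_injective (α := Bool) e.injective
  obtain ⟨A, hAc, hA⟩ := exists_countable_dense (ι → Bool)
  obtain ⟨B, hBl, hB⟩ :=
    exists_isLeftSeparated_isCountablyDense hℵ (by rw [hι, continuum_power_aleph0])
  have : Countable A := hAc.to_subtype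
  refine ⟨A, B, hA, hB.dense, isLeftSeparated_of_countable, hBl, ?_⟩
  have : BaireSpace ↥(A ∪ B) := (hB.mono subset_union_right).baireSpace
  have : PerfectSpace (ι → Bool) := perfectSpace_pi
  have : PerfectSpace ↥(A ∪ B) := (hA.mono subset_union_left).perfectSpace_subtype
  have : SeparableSpace ↥(A ∪ B) :=
    hAc.separableSpace_of_subset_closure subset_union_left (hA.closure_eq ▸ subset_univ _)
  have : Nonempty ↥(A ∪ B) := (hA.mono subset_union_left).nonempty.to_subtype
  exact not_isLeftSeparated_of_baireSpace

theorem stmt_12 :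
    ∃ A B : Set CantorCubeContinuum,
      Dense A ∧ Dense B ∧ IsLeftSeparated ↥A ∧ IsLeftSeparated ↥B ∧
      ¬ IsLeftSeparated ↥(A ∪ B) :=
  exists_dense_isLeftSeparated_not_isLeftSeparated_union <| by
    rw [Cardinal.mk_Iio_ordinal, card_ord, two_power_aleph0, lift_continuum]
end

section
/- Let n be a natural number, X a topological space with X = ⋃_{i<n} X_i, for A ⊆ n set Z_A = (⋂_{j∈n\A} cl(X_j)) \ (⋃_{j∈A} cl(X_j)), and for i < n set Y_i = ⋃{Z_A : A ⊆ n, |A| = i}. Then the sets Y_0,…,Y_{n−1} are pairwise disjoint with ⋃_{i<n} Y_i = X, and for each i < n the set ⋃_{j≤i} Y_j is closed in X. -/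
universe u

open Set

/-- `Z_A = (⋂_{j ∉ A} cl(X_j)) \ (⋃_{j ∈ A} cl(X_j))`. -/
def ZSet {X : Type u} [TopologicalSpace X] {n : ℕ} (Xi : Fin n → Set X)
    (A : Set (Fin n)) : Set X :=
  (⋂ j ∈ Aᶜ, closure (Xi j)) \ (⋃ j ∈ A, closure (Xi j))

/-- `Y_i = ⋃ { Z_A : A ⊆ n, |A| = i }`. -/
def YSet {X : Type u} [TopologicalSpace X] {n : ℕ} (Xi : Fin n → Set X)
    (i : ℕ) : Set X :=
  ⋃ A ∈ {A : Set (Fin n) | A.ncard = i}, ZSet Xi A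

lemma mem_ZSet_iff {X : Type u} [TopologicalSpace X] {n : ℕ} (Xi : Fin n → Set X)
    {A : Set (Fin n)} {x : X} :
    x ∈ ZSet Xi A ↔ A = {j | x ∉ closure (Xi j)} := by
  simp only [ZSet, mem_diff, mem_iInter, mem_iUnion, not_exists, Set.mem_compl_iff,
    exists_prop]
  constructor
  · rintro ⟨h1, h2⟩
    ext j
    simp only [mem_setOf_eq]
    constructor
    · intro hj hx
      exact h2 j ⟨hj, hx⟩
    · intro hx
      by_contra hj
      exact hx (h1 j hj)
  · rintro rfl
    exact ⟨fun j hj => not_not.mp hj, fun j hj => hj.1 hj.2⟩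

lemma mem_YSet_iff {X : Type u} [TopologicalSpace X] {n : ℕ} (Xi : Fin n → Set X)
    {i : ℕ} {x : X} :
    x ∈ YSet Xi i ↔ {j : Fin n | x ∉ closure (Xi j)}.ncard = i := by
  simp [YSet, mem_ZSet_iff]

theorem stmt_14 (n : ℕ) (X : Type u) [TopologicalSpace X] (Xi : Fin n → Set X)
    (hcov : (⋃ i, Xi i) = Set.univ) :
    (∀ i j : Fin n, i ≠ j → Disjoint (YSet Xi (i : ℕ)) (YSet Xi (j : ℕ))) ∧
    (⋃ i : Fin n, YSet Xi (i : ℕ)) = Set.univ ∧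
    (∀ i : Fin n, IsClosed (⋃ j ∈ {j : Fin n | j ≤ i}, YSet Xi (j : ℕ))) := by
  have hcard : ∀ x : X, {j : Fin n | x ∉ closure (Xi j)}.ncard
      + {j : Fin n | x ∉ closure (Xi j)}ᶜ.ncard = n := by
    intro x
    have := Set.ncard_add_ncard_compl {j : Fin n | x ∉ closure (Xi j)}
    simpa using this
  refine ⟨?_, ?_, ?_⟩
  · intro i j hij
    rw [Set.disjoint_left]
    intro x hxi hxj
    rw [mem_YSet_iff] at hxi hxj
    exact hij (Fin.val_injective (hxi.symm.trans hxj))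
  · ext x
    simp only [mem_iUnion, mem_univ, iff_true]
    obtain ⟨j0, hj0⟩ : ∃ j0, x ∈ Xi j0 := by
      have : x ∈ ⋃ i, Xi i := hcov.symm ▸ mem_univ x
      exact mem_iUnion.mp this
    set A := {j : Fin n | x ∉ closure (Xi j)} with hA
    have hAne : A ≠ univ := by
      intro h
      have : j0 ∈ A := h ▸ mem_univ j0
      exact this (subset_closure hj0)
    have hlt : A.ncard < n := by
      have := Set.ncard_lt_ncard (ssubset_univ_iff.mpr hAne) Set.finite_univ
      simpa [Set.ncard_univ] using this
    exact ⟨⟨A.ncard, hlt⟩, (mem_YSet_iff Xi).mpr rfl⟩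
  · intro i
    have key : (⋃ j ∈ {j : Fin n | j ≤ i}, YSet Xi (j : ℕ)) =
        ⋃ B ∈ {B : Set (Fin n) | B.ncard = n - (i : ℕ)}, ⋂ j ∈ B, closure (Xi j) := by
      ext x
      simp only [mem_iUnion, mem_setOf_eq, mem_iInter, mem_YSet_iff, exists_prop]
      set A := {j : Fin n | x ∉ closure (Xi j)} with hA
      constructor
      · rintro ⟨j, hji, hj⟩
        have hji' : (j : ℕ) ≤ (i : ℕ) := hji
        have hle : n - (i : ℕ) ≤ Aᶜ.ncard := by
          have h2 := hcard x
          rw [← hA] at h2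
          omega
        obtain ⟨B, hBsub, hBcard⟩ := Set.exists_subset_card_eq hle
        refine ⟨B, hBcard, fun k hk => ?_⟩
        exact not_not.mp (hBsub hk)
      · rintro ⟨B, hBcard, hB⟩
        have hBsub : B ⊆ Aᶜ := fun k hk hkA => hkA (hB k hk)
        have h1 : n - (i : ℕ) ≤ Aᶜ.ncard := hBcard ▸ Set.ncard_le_ncard hBsub (Set.toFinite _)
        have h2 := hcard x
        rw [← hA] at h2
        have hle : A.ncard ≤ (i : ℕ) := by
          have := i.isLt
          omega
        refine ⟨⟨A.ncard, lt_of_le_of_lt hle i.isLt⟩, ?_, rfl⟩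
        exact hle
    rw [key]
    exact Set.Finite.isClosed_biUnion (Set.toFinite _)
      (fun B _ => isClosed_biInter fun j _ => isClosed_closure)
end

section
/- Let λ be a strong limit cardinal with cf(λ) = ω, and let B(λ) = D(λ)^ω be the Baire space of weight λ, i.e., the countable product of the discrete space of cardinality λ. If C ⊆ B(λ) has cardinality λ⁺, then there is D ⊆ C with |D| = λ such that the closure of D in B(λ) has cardinality λ^ω (cardinal exponentiation). -/
/-!
Call a finite sequence `s` big if more than `λ` points of `C` extend it. There are only `λ` finite
sequences, so all but `λ` points of a big cylinder have only big restrictions. For `κ < λ` these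
points have at least `κ` distinct restrictions to some level `N`: otherwise there would be at most
`κ ^ ℵ₀ ≤ 2 ^ κ < λ` of them, or, for finite `κ`, fewer than `κ`, as finitely many points are
already separated at a single level. Hence every big node has `κ` pairwise incomparable big
extensions.

As `cf λ = ω` and `λ` is a strong limit, there are `κₙ < λ` with `sup κₙ = λ` and
`λ ^ ℵ₀ ≤ 2 ^ λ ≤ ∏ 2 ^ κₙ ≤ ∏ κₙ₊₁`. Splitting at depth `n` into `κₙ` pieces gives a tree of at
most `λ` big nodes with `∏ κₙ` branches; a point of `C` in each node gives `D`, and every branch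
lies in the closure of `D`.
-/

open Cardinal Filter Set

universe u

namespace BaireTree

section Cylinders

variable {α : Type*}

def trunc (x : ℕ → α) (n : ℕ) : List α := List.ofFn fun i : Fin n => x i

@[simp] theorem length_trunc (x : ℕ → α) (n : ℕ) : (trunc x n).length = n := by
  simp [trunc]

@[simp] theorem getElem_trunc (x : ℕ → α) (n i : ℕ) (h : i < (trunc x n).length) :
    (trunc x n)[i] = x i := by
  simp [trunc]

theorem trunc_eq_trunc_iff {x y : ℕ → α} {n : ℕ} :
    trunc x n = trunc y n ↔ ∀ i < n, x i = y i := by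
  simp [trunc, List.ofFn_inj, funext_iff, Fin.forall_iff]

def cyl (s : List α) : Set (ℕ → α) := {x | ∀ i (hi : i < s.length), x i = s[i]}

@[simp] theorem cyl_nil : cyl ([] : List α) = Set.univ := by
  ext x; simp [cyl]

theorem mem_cyl_trunc (x : ℕ → α) (n : ℕ) : x ∈ cyl (trunc x n) := by
  simp [cyl]

theorem prefix_trunc_of_mem_cyl {s : List α} {x : ℕ → α} (hx : x ∈ cyl s) {n : ℕ}
    (hn : s.length ≤ n) : s <+: trunc x n :=
  List.prefix_iff_getElem.2 ⟨by simpa using hn, fun i hi => by simp [hx i hi]⟩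

theorem prefix_or_prefix_of_mem_cyl {s t : List α} {x : ℕ → α} (hs : x ∈ cyl s)
    (ht : x ∈ cyl t) : s <+: t ∨ t <+: s :=
  List.prefix_or_prefix_of_prefix (prefix_trunc_of_mem_cyl hs (le_max_left _ _))
    (prefix_trunc_of_mem_cyl ht (le_max_right s.length t.length))

theorem disjoint_cyl {s t : List α} (hst : ¬s <+: t) (hts : ¬t <+: s) :
    Disjoint (cyl s) (cyl t) :=
  Set.disjoint_left.2 fun _ hs ht => (prefix_or_prefix_of_mem_cyl hs ht).elim hst hts

theorem mem_closure_of_forall_exists_eqOn [TopologicalSpace α] {D : Set (ℕ → α)} {x : ℕ → α}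
    (h : ∀ n, ∃ y ∈ D, ∀ i < n, y i = x i) : x ∈ closure D := by
  refine mem_closure_iff.2 fun U hU hxU => ?_
  obtain ⟨I, u, hu, hIU⟩ := isOpen_pi_iff.1 hU x hxU
  obtain ⟨y, hyD, hy⟩ := h (I.sup id + 1)
  refine ⟨y, hIU fun i hi => ?_, hyD⟩
  rw [hy i (Nat.lt_succ_of_le (Finset.le_sup (f := id) hi))]
  exact (hu i hi).2

theorem eventually_injOn_trunc {A : Set (ℕ → α)} (hA : A.Finite) :
    ∀ᶠ n in atTop, A.InjOn (trunc · n) := by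
  refine hA.eventually_all.2 fun x _ => hA.eventually_all.2 fun y _ => ?_
  by_cases hxy : x = y
  · exact Eventually.of_forall fun _ _ => hxy
  obtain ⟨i, hi⟩ := Function.ne_iff.1 hxy
  filter_upwards [eventually_gt_atTop i] with n hn heq
  exact absurd (trunc_eq_trunc_iff.1 heq i hn) hi

theorem eventually_le_mk_image_trunc {A : Set (ℕ → α)} {κ : Cardinal} (hκ : κ < ℵ₀)
    (hA : κ ≤ #A) : ∀ᶠ n in atTop, κ ≤ #((trunc · n) '' A) := by
  obtain ⟨F, hFA, rfl⟩ := le_mk_iff_exists_subset.1 hA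
  filter_upwards [eventually_injOn_trunc (lt_aleph0_iff_set_finite.1 hκ)] with n hn
  rw [← mk_image_eq_of_injOn _ _ hn]
  exact mk_le_mk_of_subset (image_mono hFA)

theorem mk_le_prod_mk_image_trunc (A : Set (ℕ → α)) (N : ℕ) :
    #A ≤ prod fun n => #((trunc · (N + n)) '' A) := by
  rw [← mk_pi]
  refine mk_le_of_injective (f := fun x n => ⟨trunc x (N + n), mem_image_of_mem _ x.2⟩) ?_
  intro x y hxy
  ext i
  exact trunc_eq_trunc_iff.1 (congrArg Subtype.val (congrFun hxy (i + 1))) i (by omega)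

end Cylinders

section Big

variable {α : Type u}

def IsBig (lam : Cardinal.{u}) (C : Set (ℕ → α)) (s : List α) : Prop :=
  lam < #↥(C ∩ cyl s)

variable {lam : Cardinal.{u}} {C : Set (ℕ → α)}

theorem mk_setOf_exists_not_isBig_le (hα : #α ≤ lam) (hlam : ℵ₀ ≤ lam) :
    #{x ∈ C | ∃ n, ¬IsBig lam C (trunc x n)} ≤ lam := by
  have hsub : {x ∈ C | ∃ n, ¬IsBig lam C (trunc x n)} ⊆
      ⋃ t : {t : List α // ¬IsBig lam C t}, C ∩ cyl t.1 := by
    rintro x ⟨hxC, n, hn⟩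
    exact mem_iUnion.2 ⟨⟨trunc x n, hn⟩, hxC, mem_cyl_trunc x n⟩
  calc #{x ∈ C | ∃ n, ¬IsBig lam C (trunc x n)}
      ≤ #{t : List α // ¬IsBig lam C t} * ⨆ t : {t : List α // ¬IsBig lam C t}, #↥(C ∩ cyl t.1) :=
        (mk_le_mk_of_subset hsub).trans (mk_iUnion_le _)
    _ ≤ lam * lam := by
        gcongr
        · exact (mk_subtype_le _).trans ((mk_list_le_max α).trans (max_le hlam hα))
        · exact ciSup_le' fun t => not_lt.1 t.2
    _ = lam := mul_eq_self hlam

theorem lt_mk_setOf_forall_isBig (hα : #α ≤ lam) (hlam : ℵ₀ ≤ lam) {s : List α}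
    (hs : IsBig lam C s) : lam < #{x ∈ C ∩ cyl s | ∀ n, IsBig lam C (trunc x n)} := by
  by_contra! hle
  have hcover : C ∩ cyl s ⊆
      {x ∈ C ∩ cyl s | ∀ n, IsBig lam C (trunc x n)} ∪ {x ∈ C | ∃ n, ¬IsBig lam C (trunc x n)} :=
    fun x hx => (em (∀ n, IsBig lam C (trunc x n))).imp (⟨hx, ·⟩) fun h => ⟨hx.1, not_forall.1 h⟩
  refine hs.not_ge ?_
  calc #↥(C ∩ cyl s) ≤ #{x ∈ C ∩ cyl s | ∀ n, IsBig lam C (trunc x n)} +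
        #{x ∈ C | ∃ n, ¬IsBig lam C (trunc x n)} :=
        (mk_le_mk_of_subset hcover).trans (mk_union_le _ _)
    _ ≤ lam + lam := add_le_add hle (mk_setOf_exists_not_isBig_le hα hlam)
    _ = lam := add_eq_self hlam

theorem exists_le_mk_setOf_isBig (hlam : lam.IsStrongLimit) (hα : #α ≤ lam) {s : List α}
    (hs : IsBig lam C s) {κ : Cardinal.{u}} (hκ : κ < lam) :
    ∃ N, s.length < N ∧ κ ≤ #{t | s <+: t ∧ t.length = N ∧ IsBig lam C t} := by
  set B := {x ∈ C ∩ cyl s | ∀ n, IsBig lam C (trunc x n)}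
  have hB : lam < #B := lt_mk_setOf_forall_isBig hα hlam.aleph0_le hs
  have himage : ∀ N, s.length ≤ N →
      (trunc · N) '' B ⊆ {t | s <+: t ∧ t.length = N ∧ IsBig lam C t} := by
    rintro N hN _ ⟨x, hx, rfl⟩
    exact ⟨prefix_trunc_of_mem_cyl hx.1.2 hN, length_trunc x N, hx.2 N⟩
  by_contra! hlevel
  rcases lt_or_ge κ ℵ₀ with hfin | hinf
  · obtain ⟨N, hκN, hN⟩ := ((eventually_le_mk_image_trunc hfin (hκ.trans hB).le).and
      (eventually_gt_atTop s.length)).exists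
    exact (hκN.trans (mk_le_mk_of_subset (himage N hN.le))).not_gt (hlevel N hN)
  · refine hB.not_ge ((mk_le_prod_mk_image_trunc B (s.length + 1)).trans ?_)
    calc (prod fun n => #((trunc · (s.length + 1 + n)) '' B))
        ≤ prod fun _ : ℕ => κ := prod_le_prod _ _ fun n =>
          (mk_le_mk_of_subset (himage _ (by omega))).trans (hlevel _ (by omega)).le
      _ = κ ^ ℵ₀ := by simp [prod_const]
      _ ≤ (2 ^ κ) ^ ℵ₀ := power_le_power_right (cantor κ).le
      _ = 2 ^ κ := by rw [← power_mul, mul_aleph0_eq hinf]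
      _ ≤ lam := (hlam.isStrongPrelimit hκ).le

end Big

/-- `child s n` splits the node `s` for a branch at depth `n`; the depth is unrelated to
`s.length`, which only has to grow along each branch. -/
structure SplittingScheme {α : Type*} (C : Set (ℕ → α)) (ι : ℕ → Type*) where
  nodes : Set (List α)
  child : List α → (n : ℕ) → ι n → List α
  nil_mem : [] ∈ nodes
  child_mem {s n i} : s ∈ nodes → child s n i ∈ nodes
  nonempty {s} : s ∈ nodes → (C ∩ cyl s).Nonempty
  prefix_child {s n i} : s ∈ nodes → s <+: child s n i
  length_lt_child {s n i} : s ∈ nodes → s.length < (child s n i).length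
  not_prefix_child {s n i j} : s ∈ nodes → i ≠ j → ¬child s n i <+: child s n j

namespace SplittingScheme

variable {α : Type u} {C : Set (ℕ → α)} {ι : ℕ → Type u} (S : SplittingScheme C ι)

def node (β : ∀ n, ι n) : ℕ → List α
  | 0 => []
  | n + 1 => S.child (node β n) n (β n)

@[simp] theorem node_succ (β : ∀ n, ι n) (n : ℕ) :
    S.node β (n + 1) = S.child (S.node β n) n (β n) := rfl

theorem node_mem (β : ∀ n, ι n) (n : ℕ) : S.node β n ∈ S.nodes := by
  induction n with
  | zero => exact S.nil_mem
  | succ n ih => exact S.child_mem ih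

theorem le_length_node (β : ∀ n, ι n) (n : ℕ) : n ≤ (S.node β n).length := by
  induction n with
  | zero => exact Nat.zero_le _
  | succ n ih => exact ih.trans_lt (by simpa using S.length_lt_child (S.node_mem β n))

theorem node_prefix_node (β : ∀ n, ι n) {n m : ℕ} (h : n ≤ m) : S.node β n <+: S.node β m := by
  induction m, h using Nat.le_induction with
  | base => exact List.prefix_refl _
  | succ m _ ih => exact ih.trans (by simpa using S.prefix_child (S.node_mem β m))

theorem node_congr {β γ : ∀ n, ι n} {n : ℕ} (h : ∀ i < n, β i = γ i) :
    S.node β n = S.node γ n := by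
  induction n with
  | zero => rfl
  | succ n ih =>
    rw [node_succ, node_succ, ih fun i hi => h i (hi.trans n.lt_succ_self), h n n.lt_succ_self]

def branch (β : ∀ n, ι n) (i : ℕ) : α :=
  (S.node β (i + 1))[i]'((S.le_length_node β (i + 1)).trans_lt' i.lt_succ_self)

theorem branch_mem_cyl (β : ∀ n, ι n) (n : ℕ) : S.branch β ∈ cyl (S.node β n) := fun i hi =>
  ((S.node_prefix_node β (le_max_right n (i + 1))).getElem _).trans
    ((S.node_prefix_node β (le_max_left n (i + 1))).getElem hi).symm

theorem disjoint_cyl_child {s : List α} (hs : s ∈ S.nodes) {n : ℕ} {i j : ι n} (hij : i ≠ j) :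
    Disjoint (cyl (S.child s n i)) (cyl (S.child s n j)) :=
  disjoint_cyl (S.not_prefix_child hs hij) (S.not_prefix_child hs hij.symm)

theorem branch_injective : Function.Injective S.branch := by
  classical
  intro β γ hβγ
  by_contra hne
  have hex : ∃ n, β n ≠ γ n := Function.ne_iff.1 hne
  obtain ⟨n, hn, hmin⟩ : ∃ n, β n ≠ γ n ∧ ∀ i < n, β i = γ i :=
    ⟨Nat.find hex, Nat.find_spec hex, fun i hi => not_not.1 (Nat.find_min hex hi)⟩
  have hγ := S.branch_mem_cyl γ (n + 1)
  rw [← hβγ, node_succ, ← S.node_congr hmin] at hγ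
  exact Set.disjoint_left.1 (S.disjoint_cyl_child (S.node_mem β n) hn)
    (S.branch_mem_cyl β (n + 1)) hγ

noncomputable def pick (s : S.nodes) : ℕ → α := (S.nonempty s.2).some

theorem pick_mem (s : S.nodes) : S.pick s ∈ C ∩ cyl s.1 := (S.nonempty s.2).some_mem

theorem branch_mem_closure [TopologicalSpace α] (β : ∀ n, ι n) :
    S.branch β ∈ closure (range S.pick) := by
  refine mem_closure_of_forall_exists_eqOn fun n => ⟨_, mem_range_self ⟨_, S.node_mem β n⟩, ?_⟩
  intro i hi
  have hi' := hi.trans_le (S.le_length_node β n)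
  rw [(S.pick_mem _).2 i hi', S.branch_mem_cyl β n i hi']

theorem injective_pick_child (n : ℕ) :
    Function.Injective fun i : ι n => S.pick ⟨S.child [] n i, S.child_mem S.nil_mem⟩ := by
  intro i j hij
  by_contra hne
  have hi := (S.pick_mem ⟨S.child [] n i, S.child_mem S.nil_mem⟩).2
  rw [show S.pick _ = _ from hij] at hi
  exact Set.disjoint_left.1 (S.disjoint_cyl_child S.nil_mem hne) hi
    (S.pick_mem ⟨S.child [] n j, S.child_mem S.nil_mem⟩).2

theorem mk_le_mk_range_pick (n : ℕ) : #(ι n) ≤ #(range S.pick) :=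
  mk_le_of_injective (f := fun _ => ⟨_, mem_range_self _⟩)
    fun _ _ h => S.injective_pick_child n (congrArg Subtype.val h)

theorem exists_subset_closure [TopologicalSpace α] :
    ∃ D ⊆ C, #D ≤ #S.nodes ∧ (∀ n, #(ι n) ≤ #D) ∧ #(∀ n, ι n) ≤ #(closure D) := by
  refine ⟨range S.pick, range_subset_iff.2 fun s => (S.pick_mem s).1, mk_range_le,
    S.mk_le_mk_range_pick, ?_⟩
  exact mk_le_of_injective (f := fun β => ⟨S.branch β, S.branch_mem_closure β⟩)
    fun β γ h => S.branch_injective (congrArg Subtype.val h)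

end SplittingScheme

section Construction

variable {α : Type u} {lam : Cardinal.{u}} {C : Set (ℕ → α)}

theorem exists_antichain_of_isBig (hlam : lam.IsStrongLimit) (hα : #α ≤ lam) {s : List α}
    (hs : IsBig lam C s) {κ : Cardinal.{u}} (hκ : κ < lam) :
    ∃ f : κ.out → List α, (∀ i, s <+: f i ∧ s.length < (f i).length ∧ IsBig lam C (f i)) ∧
      Pairwise fun i j => ¬f i <+: f j := by
  obtain ⟨N, hN, hκN⟩ := exists_le_mk_setOf_isBig hlam hα hs hκ
  obtain ⟨e⟩ := le_def _ _ |>.1 ((mk_out κ).trans_le hκN)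
  refine ⟨fun i => (e i).1, fun i => ?_, fun i j hij hpre => hij (e.injective ?_)⟩
  · obtain ⟨hpre, hlen, hbig⟩ := (e i).2
    exact ⟨hpre, by rwa [hlen], hbig⟩
  · exact Subtype.ext (hpre.eq_of_length ((e i).2.2.1.trans (e j).2.2.1.symm))

theorem exists_splittingScheme (hlam : lam.IsStrongLimit) (hα : #α ≤ lam) (hC : lam < #C)
    {κ : ℕ → Cardinal.{u}} (hκ : ∀ n, κ n < lam) :
    Nonempty (SplittingScheme C fun n => (κ n).out) := by
  choose! child hchild hanti using fun s (hs : IsBig lam C s) n =>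
    exists_antichain_of_isBig hlam hα hs (hκ n)
  exact ⟨{
    nodes := {s | IsBig lam C s}
    child := child
    nil_mem := by simpa [IsBig] using hC
    child_mem := fun hs => (hchild _ hs _ _).2.2
    nonempty := fun hs => nonempty_coe_sort.1 (mk_ne_zero_iff.1 (zero_le.trans_lt hs).ne')
    prefix_child := fun hs => (hchild _ hs _ _).1
    length_lt_child := fun hs => (hchild _ hs _ _).2.1
    not_prefix_child := fun hs hij => hanti _ hs _ hij }⟩

theorem exists_subset_prod_le_mk_closure [TopologicalSpace α] (hlam : lam.IsStrongLimit)
    (hα : #α ≤ lam) (hC : lam < #C) {κ : ℕ → Cardinal.{u}} (hκ : ∀ n, κ n < lam) :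
    ∃ D ⊆ C, #D ≤ lam ∧ (∀ n, κ n ≤ #D) ∧ prod κ ≤ #(closure D) := by
  obtain ⟨S⟩ := exists_splittingScheme hlam hα hC hκ
  obtain ⟨D, hDC, hDnodes, hκD, hclosure⟩ := S.exists_subset_closure
  refine ⟨D, hDC, ?_, fun n => mk_out (κ n) ▸ hκD n, by simpa [mk_pi] using hclosure⟩
  calc #D ≤ #S.nodes := hDnodes
    _ ≤ #(List α) := mk_set_le _
    _ ≤ lam := (mk_list_le_max α).trans (max_le hlam.aleph0_le hα)

end Construction

end BaireTree

namespace Cardinal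

theorem exists_seq_lt_forall_le_of_cof_eq_aleph0 {c : Cardinal.{u}} (hc : c.ord.cof = ℵ₀) :
    ∃ μ : ℕ → Cardinal.{u}, (∀ n, μ n < c) ∧ ∀ d < c, ∃ n, d ≤ μ n := by
  obtain ⟨f, hf⟩ := Ordinal.exists_isFundamentalSeq (o := c.ord) (a := Ordinal.omega0)
    (by rw [hc, ord_aleph0])
  refine ⟨fun n => (f ⟨n, Ordinal.natCast_lt_omega0 n⟩).1.card, fun n => lt_ord.1 (f _).2,
    fun d hd => ?_⟩
  obtain ⟨_, ⟨i, rfl⟩, hi⟩ := hf.isCofinal_range ⟨d.ord, ord_lt_ord.2 hd⟩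
  obtain ⟨n, hn⟩ := Ordinal.lt_omega0.1 i.2
  obtain rfl : i = ⟨n, Ordinal.natCast_lt_omega0 n⟩ := Subtype.ext hn
  exact ⟨n, ord_le.1 hi⟩

theorem exists_seq_lt_le_iSup_power_aleph0_le_prod {c : Cardinal.{u}} (hc : c.IsStrongLimit)
    (hcof : c.ord.cof = ℵ₀) :
    ∃ κ : ℕ → Cardinal.{u}, (∀ n, κ n < c) ∧ c ≤ ⨆ n, κ n ∧ c ^ ℵ₀ ≤ prod κ := by
  obtain ⟨μ, hμ, hμc⟩ := exists_seq_lt_forall_le_of_cof_eq_aleph0 hcof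
  let τ : ℕ → Cardinal.{u} := fun n => Nat.rec 0 (fun n t => max (μ n) (2 ^ t)) n
  have hτ : ∀ n, τ n < c := fun n => by
    induction n with
    | zero => exact pos_iff_ne_zero.2 hc.ne_zero
    | succ n ih => exact max_lt (hμ n) (hc.isStrongPrelimit ih)
  have hsup : c ≤ ⨆ n, τ (n + 1) := le_of_forall_lt fun d hd => by
    obtain ⟨n, hn⟩ := hμc (2 ^ d) (hc.isStrongPrelimit hd)
    exact (cantor d).trans_le (hn.trans ((le_max_left _ (2 ^ τ n)).trans
      (le_ciSup bddAbove_of_small n)))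
  refine ⟨fun n => τ (n + 1), fun n => hτ (n + 1), hsup, ?_⟩
  calc c ^ ℵ₀ ≤ c ^ c := power_le_power_left hc.ne_zero hc.aleph0_le
    _ = 2 ^ c := power_self_eq hc.aleph0_le
    _ ≤ 2 ^ sum τ := power_le_power_left two_ne_zero
        (hsup.trans (ciSup_le' fun n => le_sum τ (n + 1)))
    _ = prod fun n => 2 ^ τ n := power_sum _ _
    _ ≤ prod fun n => τ (n + 1) := prod_le_prod _ _ fun n => le_max_right (μ n) _

end Cardinal

theorem stmt_16_general (lam : Cardinal.{0}) (hsl : lam.IsStrongLimit)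
    (hcf : lam.ord.cof = Cardinal.aleph0)
    (Lam : Type) [TopologicalSpace Lam] (hLam : #Lam = lam)
    (C : Set (ℕ → Lam)) (hC : #↥C = Order.succ lam) :
    ∃ D ⊆ C, #↥D = lam ∧ #↥(closure D) = lam ^ Cardinal.aleph0 := by
  obtain ⟨κ, hκlt, hκsup, hκprod⟩ := exists_seq_lt_le_iSup_power_aleph0_le_prod hsl hcf
  obtain ⟨D, hDC, hDle, hκD, hclosure⟩ :=
    BaireTree.exists_subset_prod_le_mk_closure hsl hLam.le (hC ▸ Order.lt_succ lam) hκlt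
  refine ⟨D, hDC, hDle.antisymm (hκsup.trans (ciSup_le' hκD)),
    le_antisymm ?_ (hκprod.trans hclosure)⟩
  calc #(closure D) ≤ #(ℕ → Lam) := mk_set_le _
    _ = lam ^ ℵ₀ := by rw [← hLam, ← mk_nat, power_def]

theorem stmt_16 (lam : Cardinal.{0}) (hsl : lam.IsStrongLimit)
    (hcf : lam.ord.cof = Cardinal.aleph0)
    (Lam : Type) [TopologicalSpace Lam] [DiscreteTopology Lam] (hLam : #Lam = lam)
    (C : Set (ℕ → Lam)) (hC : #↥C = Order.succ lam) :
    ∃ D ⊆ C, #↥D = lam ∧ #↥(closure D) = lam ^ Cardinal.aleph0 :=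
  stmt_16_general lam hsl hcf Lam hLam C hC
end

section
/- For every infinite ordinal α, the ordinal space ω^α (ordinal exponentiation), equipped with its order topology, has cardinality |α| and is right-separated with ord_r(ω^α) ≥ α. -/
universe u

open Cardinal Ordinal

/-- `o` is the order type of some right-separating well-ordering of `X`:
a well-ordering all of whose initial segments are open. -/
def IsRightSepType (X : Type u) [TopologicalSpace X] (o : Ordinal.{u}) : Prop :=
  ∃ (r : X → X → Prop) (hwo : IsWellOrder X r),
    (∀ x : X, IsOpen {y | r y x}) ∧ o = @Ordinal.type X r hwo

/-- A space is right-separated if it admits a right-separating well-ordering. -/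
def IsRightSeparated (X : Type u) [TopologicalSpace X] : Prop :=
  ∃ o, IsRightSepType X o

/-- The right-separating type of a space: the minimum of the order types of its
right-separating well-orderings. -/
noncomputable def ordR (X : Type u) [TopologicalSpace X] : Ordinal.{u} :=
  sInf {o | IsRightSepType X o}

/-!
Let `≺` be a right-separating well-ordering of a well-ordered space `X` with its order
topology, and call a point `x` of order type `v = typein (<) x` *of level `β`* if `v ≠ 0`
and `ω ^ β ∣ v`. A point of level `γ + 1` is a limit, from below, of points of level `γ`.
Since the closed `≺`-initial segment `{y | y ≼ x}` is open, it contains such a point `y ≠ x`,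
so `y ≺ x`. By induction on `β`, the `≺`-rank of a point of level `β` is at least `β`; the
point of order type `ω ^ β` has level `β`, so `type ≺ > β` whenever `ω ^ β < type (<)`.
-/

open Set

theorem Ordinal.exists_omega0_opow_dvd_mem_Ioo {γ v l : Ordinal} (hv : ω ^ (γ + 1) ∣ v)
    (hl : l < v) : ∃ w ∈ Ioo l v, ω ^ γ ∣ w := by
  obtain ⟨c, rfl⟩ := hv
  have hc : c ≠ 0 := by rintro rfl; simp at hl
  rw [opow_add_one, mul_assoc] at hl ⊢
  obtain ⟨d, hd, hld⟩ := (lt_mul_iff_of_isSuccLimit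
    (isSuccLimit_mul_left isSuccLimit_omega0 (pos_iff_ne_zero.2 hc))).1 hl
  exact ⟨ω ^ γ * d, ⟨hld, (mul_lt_mul_iff_right₀ (opow_pos γ omega0_pos)).2 hd⟩,
    dvd_mul_right _ _⟩

section RightSeparating

variable {X : Type u} [TopologicalSpace X] (r : X → X → Prop) [IsWellOrder X r]

theorem isOpen_setOf_not_rel (hr : ∀ x, IsOpen {y | r y x}) (x : X) :
    IsOpen {y | ¬ r x y} := by
  by_cases h : ∃ z, r x z
  · -- `{y | ¬ r x y}` is the open initial segment below the `r`-successor of `x`.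
    obtain ⟨z, hz⟩ := h
    have hwf := IsWellFounded.wf (r := r)
    have hmin := hwf.min_mem {z | r x z} ⟨z, hz⟩
    convert hr (hwf.min {z | r x z} ⟨z, hz⟩) using 1
    ext y
    refine ⟨fun hy => ?_, fun hy hxy => hwf.not_lt_min {z | r x z} hxy hy⟩
    rcases trichotomous_of r y x with h | rfl | h
    · exact trans_of r h hmin
    · exact hmin
    · exact absurd h hy
  · push Not at h
    simp [h]

theorem typein_lt_of_mem_closure (hr : ∀ x, IsOpen {y | r y x}) {x : X} {γ : Ordinal}
    (hx : x ∈ closure ({y | γ ≤ typein r y} \ {x})) : γ < typein r x := by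
  obtain ⟨y, hyx, hγy, hne⟩ :=
    mem_closure_iff.1 hx _ (isOpen_setOf_not_rel r hr x) (irrefl_of r x)
  have hry : r y x :=
    (trichotomous_of r y x).resolve_right (by rintro (rfl | h); exacts [hne rfl, hyx h])
  exact hγy.trans_lt ((typein_lt_typein r).2 hry)

end RightSeparating

theorem mem_closure_diff_singleton_of_forall_exists_mem_Ioo {X : Type u} [LinearOrder X]
    [TopologicalSpace X] [OrderTopology X] {t : Set X} {x : X}
    (hx : ∃ l, l < x) (ht : ∀ l < x, ∃ y ∈ Ioo l x, y ∈ t) : x ∈ closure (t \ {x}) := by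
  refine mem_closure_iff_nhds.2 fun U hU => ?_
  obtain ⟨l, hlx, hlU⟩ := exists_Ioc_subset_of_mem_nhds hU hx
  obtain ⟨y, hy, hyt⟩ := ht l hlx
  exact ⟨y, hlU (Ioo_subset_Ioc_self hy), hyt, hy.2.ne⟩

section WellOrderedSpace

variable {X : Type u} [LinearOrder X] [WellFoundedLT X] [TopologicalSpace X] [OrderTopology X]

theorem isRightSepType_typeLT : IsRightSepType X (typeLT X) :=
  ⟨(· < ·), inferInstance, fun _ => isOpen_Iio, rfl⟩

variable (r : X → X → Prop) [IsWellOrder X r]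

theorem le_typein_of_omega0_opow_dvd (hr : ∀ x, IsOpen {y | r y x}) (β : Ordinal) :
    ∀ x : X, typein (α := X) (· < ·) x ≠ 0 → ω ^ β ∣ typein (α := X) (· < ·) x →
      β ≤ typein r x := by
  induction β using Ordinal.limitRecOn with
  | zero => exact fun _ _ _ => zero_le
  | add_one γ IH =>
    intro x hx0 hdvd
    have hx : x ∈ closure ({y : X | typein (α := X) (· < ·) y ≠ 0 ∧
        ω ^ γ ∣ typein (α := X) (· < ·) y} \ {x}) := by
      refine mem_closure_diff_singleton_of_forall_exists_mem_Ioo ?_ fun l hlx => ?_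
      · have hpos := pos_iff_ne_zero.2 hx0
        obtain ⟨l, hl⟩ := typein_surj (· < ·) (hpos.trans (typein_lt_type _ x))
        exact ⟨l, (typein_lt_typein (· < ·)).1 (hl ▸ hpos)⟩
      obtain ⟨w, ⟨hlw, hwx⟩, hw⟩ := Ordinal.exists_omega0_opow_dvd_mem_Ioo hdvd
        ((typein_lt_typein (· < ·)).2 hlx)
      obtain ⟨y, rfl⟩ := typein_surj (· < ·) (hwx.trans (typein_lt_type _ x))
      exact ⟨y, ⟨(typein_lt_typein _).1 hlw, (typein_lt_typein _).1 hwx⟩,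
        (pos_of_gt hlw).ne', hw⟩
    exact Order.add_one_le_of_lt (typein_lt_of_mem_closure r hr
      (closure_mono (sdiff_subset_sdiff_left fun y hy => IH y hy.1 hy.2) hx))
  | limit γ hγ IH =>
    intro x hx0 hdvd
    refine le_of_forall_lt fun δ hδ => (Order.lt_succ δ).trans_le ?_
    have hsucc := hγ.succ_lt hδ
    exact IH _ hsucc x hx0 ((opow_dvd_opow _ hsucc.le).trans hdvd)

theorem le_type_of_omega0_opow_le_typeLT (hr : ∀ x, IsOpen {y | r y x}) {α : Ordinal}
    (hα : ω ^ α ≤ typeLT X) : α ≤ type r := by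
  refine le_of_forall_lt fun β hβ => ?_
  have hβα := (opow_lt_opow_iff_right one_lt_omega0).2 hβ
  obtain ⟨x, hx⟩ := typein_surj (· < ·) (hβα.trans_le hα)
  exact (le_typein_of_omega0_opow_dvd r hr β x (hx ▸ (opow_pos β omega0_pos).ne')
    (hx ▸ dvd_rfl)).trans_lt (typein_lt_type r x)

end WellOrderedSpace

theorem stmt_18 (α : Ordinal.{0}) (hα : Ordinal.omega0 ≤ α)
    (τ : TopologicalSpace (Ordinal.omega0 ^ α).ToType)
    (hτ : τ = Preorder.topology ((Ordinal.omega0 ^ α).ToType)) :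
    #((Ordinal.omega0 ^ α).ToType) = α.card ∧
    @IsRightSeparated _ τ ∧ α ≤ @ordR _ τ := by
  subst hτ
  let _ : TopologicalSpace (ω ^ α).ToType := Preorder.topology _
  have : OrderTopology (ω ^ α).ToType := ⟨rfl⟩
  have hnat := isRightSepType_typeLT (X := (ω ^ α).ToType)
  rw [type_toType] at hnat
  refine ⟨?_, ⟨_, hnat⟩, le_csInf ⟨_, hnat⟩ ?_⟩
  · rw [mk_toType, card_omega0_opow (omega0_pos.trans_le hα).ne',
      max_eq_right (aleph0_le_card.2 hα)]
  · rintro _ ⟨r, _, hr, rfl⟩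
    exact le_type_of_omega0_opow_le_typeLT r hr (type_toType _).ge
end
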